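/- arXiv:2601.13915 — 7 statements merged into one kernel-verified Lean document; each statement's English description precedes it below -/
import Mathlib

section
/- Let t_1,…,t_s ∈ [−1,1] be distinct with |t_i − t_j| ≥ κ > 0 for all i ≠ j, let y = (y_1,…,y_s) ∈ ℝ^s, and let p_y(t) = Σ_{k=0}^{s−1} c_k t^k be the unique polynomial of degree ≤ s−1 with p_y(t_i) = y_i for all i. Then for every k with 0 ≤ k ≤ s−1, |c_k| ≤ ‖y‖_∞ · (s − k) · (4/κ)^{s−1}, where ‖y‖_∞ = max_i |y_i|. -/
open Polynomial

lemma coeff_prod_X_sub_C_abs_le {ι : Type*} [DecidableEq ι] (S : Finset ι) (a : ι → ℝ)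
    (ha : ∀ j ∈ S, |a j| ≤ 1) : ∀ k : ℕ,
    |(∏ j ∈ S, (X - C (a j))).coeff k| ≤ 2 ^ S.card := by
  induction S using Finset.induction_on with
  | empty =>
    intro k
    simp only [Finset.prod_empty, coeff_one, Finset.card_empty, pow_zero]
    split_ifs <;> simp
  | insert b S' hni ih =>
    intro k
    have ha' : ∀ j ∈ S', |a j| ≤ 1 := fun j hj => ha j (Finset.mem_insert_of_mem hj)
    have hab : |a b| ≤ 1 := ha b (Finset.mem_insert_self _ _)
    rw [Finset.prod_insert hni, Finset.card_insert_of_notMem hni]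
    set P := ∏ j ∈ S', (X - C (a j)) with hP
    have key : ((X - C (a b)) * P).coeff k = (X * P).coeff k - a b * P.coeff k := by
      rw [sub_mul, coeff_sub, coeff_C_mul]
    rw [key]
    have h1 : |(X * P).coeff k| ≤ 2 ^ S'.card := by
      cases k with
      | zero => simp [mul_coeff_zero]
      | succ n => rw [coeff_X_mul]; exact ih ha' n
    have h2 : |a b * P.coeff k| ≤ 2 ^ S'.card := by
      rw [abs_mul]
      calc |a b| * |P.coeff k| ≤ 1 * (2 ^ S'.card) :=
            mul_le_mul hab (ih ha' k) (abs_nonneg _) zero_le_one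
        _ = 2 ^ S'.card := one_mul _
    calc |(X * P).coeff k - a b * P.coeff k| ≤ |(X * P).coeff k| + |a b * P.coeff k| :=
          abs_sub _ _
      _ ≤ 2 ^ S'.card + 2 ^ S'.card := add_le_add h1 h2
      _ = 2 ^ (S'.card + 1) := by ring

/-- Coefficient bound for univariate interpolation: if `t_1,…,t_s ∈ [-1,1]` are distinct nodes
with separation `κ > 0` and `p` is the (unique) polynomial of degree ≤ s-1 interpolating the
data `y`, then `|c_k| ≤ ‖y‖_∞ (s-k) (4/κ)^{s-1}` for every `0 ≤ k ≤ s-1`. Here `‖y‖ = max |y i|`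
is the sup norm on `Fin s → ℝ`. -/
theorem stmt2 {s : ℕ} (hs : 2 ≤ s) (t : Fin s → ℝ)
    (ht : ∀ i, t i ∈ Set.Icc (-1 : ℝ) 1) (κ : ℝ) (hκ : 0 < κ)
    (hsep : ∀ i j, i ≠ j → κ ≤ |t i - t j|)
    (y : Fin s → ℝ) (p : Polynomial ℝ) (hdeg : p.natDegree ≤ s - 1)
    (hint : ∀ i, p.eval (t i) = y i) (k : ℕ) (hk : k ≤ s - 1) :
    |p.coeff k| ≤ ‖y‖ * ((s - k : ℕ) : ℝ) * (4 / κ) ^ (s - 1) := by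
  classical
  have hspos : 0 < s := lt_of_lt_of_le (by norm_num) hs
  have htinj : Set.InjOn t (Finset.univ : Finset (Fin s)) := by
    intro i _ j _ hij
    by_contra hne
    have := hsep i j hne
    rw [hij, sub_self, abs_zero] at this
    linarith
  -- p is the Lagrange interpolant
  have hdlt : p.degree < ((Finset.univ : Finset (Fin s)).card : WithBot ℕ) := by
    rw [Finset.card_univ, Fintype.card_fin]
    calc p.degree ≤ (p.natDegree : WithBot ℕ) := degree_le_natDegree
      _ < (s : WithBot ℕ) := by
          exact_mod_cast Nat.lt_of_le_of_lt hdeg (Nat.sub_lt hspos one_pos)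
  have hpeq : p = Lagrange.interpolate Finset.univ t y :=
    Lagrange.eq_interpolate_of_eval_eq _ htinj hdlt fun i _ => hint i
  -- bound each basis coefficient
  have hbasis : ∀ i : Fin s, |(Lagrange.basis Finset.univ t i).coeff k|
      ≤ κ⁻¹ ^ (s - 1) * 2 ^ (s - 1) := by
    intro i
    have hcard : ((Finset.univ : Finset (Fin s)).erase i).card = s - 1 := by
      rw [Finset.card_erase_of_mem (Finset.mem_univ i), Finset.card_univ, Fintype.card_fin]
    have hb : Lagrange.basis Finset.univ t i
        = C (∏ j ∈ Finset.univ.erase i, (t i - t j)⁻¹)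
          * ∏ j ∈ Finset.univ.erase i, (X - C (t j)) := by
      rw [Lagrange.basis]
      simp only [Lagrange.basisDivisor]
      rw [Finset.prod_mul_distrib, map_prod]
    rw [hb, coeff_C_mul, abs_mul]
    have h1 : |∏ j ∈ Finset.univ.erase i, (t i - t j)⁻¹| ≤ κ⁻¹ ^ (s - 1) := by
      rw [Finset.abs_prod, ← hcard, ← Finset.prod_const]
      refine Finset.prod_le_prod (fun j _ => abs_nonneg _) fun j hj => ?_
      rw [abs_inv]
      exact inv_anti₀ hκ (hsep i j (Finset.ne_of_mem_erase hj).symm)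
    have h2 : |(∏ j ∈ Finset.univ.erase i, (X - C (t j))).coeff k| ≤ 2 ^ (s - 1) := by
      rw [← hcard]
      exact coeff_prod_X_sub_C_abs_le _ _ (fun j _ => abs_le.mpr ⟨(ht j).1, (ht j).2⟩) k
    exact mul_le_mul h1 h2 (abs_nonneg _) (pow_nonneg (inv_nonneg.mpr hκ.le) _)
  -- bound the coefficient of p
  have hyi : ∀ i : Fin s, |y i| ≤ ‖y‖ := by
    intro i
    have := norm_le_pi_norm y i
    simpa using this
  have hcoeff : |p.coeff k| ≤ (s : ℝ) * (‖y‖ * (κ⁻¹ ^ (s - 1) * 2 ^ (s - 1))) := by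
    rw [hpeq, Lagrange.interpolate_apply, finset_sum_coeff]
    calc |∑ i : Fin s, (C (y i) * Lagrange.basis Finset.univ t i).coeff k|
        ≤ ∑ i : Fin s, |(C (y i) * Lagrange.basis Finset.univ t i).coeff k| :=
          Finset.abs_sum_le_sum_abs _ _
      _ ≤ ∑ _i : Fin s, ‖y‖ * (κ⁻¹ ^ (s - 1) * 2 ^ (s - 1)) := by
          refine Finset.sum_le_sum fun i _ => ?_
          rw [coeff_C_mul, abs_mul]
          exact mul_le_mul (hyi i) (hbasis i) (abs_nonneg _) (norm_nonneg _)
      _ = (s : ℝ) * (‖y‖ * (κ⁻¹ ^ (s - 1) * 2 ^ (s - 1))) := by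
          rw [Finset.sum_const, Finset.card_univ, Fintype.card_fin, nsmul_eq_mul]
  refine hcoeff.trans ?_
  -- final arithmetic
  have hsk : (1 : ℝ) ≤ ((s - k : ℕ) : ℝ) := by
    have : 1 ≤ s - k := Nat.le_sub_of_add_le (by omega)
    exact_mod_cast this
  have hs2 : (s : ℝ) ≤ 2 ^ (s - 1) := by
    have : s ≤ 2 ^ (s - 1) := by
      calc s = (s - 1) + 1 := by omega
        _ ≤ 2 ^ (s - 1) := Nat.succ_le_of_lt Nat.lt_two_pow_self
    exact_mod_cast this
  have h4κ : (4 / κ) ^ (s - 1) = 2 ^ (s - 1) * (2 ^ (s - 1) * κ⁻¹ ^ (s - 1)) := by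
    rw [← mul_pow, ← mul_pow]
    congr 1
    field_simp
    ring
  have hA : (0 : ℝ) ≤ κ⁻¹ ^ (s - 1) * 2 ^ (s - 1) :=
    mul_nonneg (pow_nonneg (inv_nonneg.mpr hκ.le) _) (by positivity)
  calc (s : ℝ) * (‖y‖ * (κ⁻¹ ^ (s - 1) * 2 ^ (s - 1)))
      ≤ 2 ^ (s - 1) * (‖y‖ * (κ⁻¹ ^ (s - 1) * 2 ^ (s - 1))) :=
        mul_le_mul_of_nonneg_right hs2 (mul_nonneg (norm_nonneg _) hA)
    _ = ‖y‖ * 1 * (4 / κ) ^ (s - 1) := by rw [h4κ]; ring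
    _ ≤ ‖y‖ * ((s - k : ℕ) : ℝ) * (4 / κ) ^ (s - 1) := by
        have h4 : (0 : ℝ) ≤ (4 / κ) ^ (s - 1) := by positivity
        have := mul_le_mul_of_nonneg_left hsk (norm_nonneg y)
        exact mul_le_mul_of_nonneg_right (by linarith) h4
end

section
/- Let t_1,…,t_s ∈ [−1,1] be distinct with |t_i − t_j| ≥ κ > 0 for all i ≠ j, let y = (y_1,…,y_s) ∈ ℝ^s, and let p_y(t) = Σ_{k=0}^{s−1} c_k t^k be the unique polynomial of degree ≤ s−1 with p_y(t_i) = y_i for all i. Then Σ_{k=0}^{s−1} |c_k| ≤ (s(s+1)/2) · ‖y‖_∞ · (4/κ)^{s−1}. -/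
open scoped BigOperators
open Polynomial Finset

noncomputable def l1p (q : Polynomial ℝ) : ℝ := ∑ k ∈ q.support, |q.coeff k|

lemma l1p_eq_sum {q : Polynomial ℝ} {S : Finset ℕ} (h : q.support ⊆ S) :
    l1p q = ∑ k ∈ S, |q.coeff k| :=
  Finset.sum_subset h (fun x _ hx => by
    simp [Polynomial.notMem_support_iff.mp hx])

lemma l1p_nonneg (q : Polynomial ℝ) : 0 ≤ l1p q :=
  Finset.sum_nonneg fun _ _ => abs_nonneg _

lemma l1p_add_le (a b : Polynomial ℝ) : l1p (a + b) ≤ l1p a + l1p b := by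
  rw [l1p_eq_sum (Polynomial.support_add : (a+b).support ⊆ a.support ∪ b.support),
    l1p_eq_sum (Finset.subset_union_left : a.support ⊆ a.support ∪ b.support),
    l1p_eq_sum (Finset.subset_union_right : b.support ⊆ a.support ∪ b.support),
    ← Finset.sum_add_distrib]
  exact Finset.sum_le_sum fun k _ => by rw [Polynomial.coeff_add]; exact abs_add_le _ _

lemma l1p_sum_le {ι : Type*} (F : Finset ι) (f : ι → Polynomial ℝ) :
    l1p (∑ i ∈ F, f i) ≤ ∑ i ∈ F, l1p (f i) := by
  classical
  induction F using Finset.cons_induction with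
  | empty => simp [l1p]
  | cons i F hi ih =>
    rw [Finset.sum_cons, Finset.sum_cons]
    exact (l1p_add_le _ _).trans (by linarith)

lemma l1p_C_mul (c : ℝ) (q : Polynomial ℝ) : l1p (Polynomial.C c * q) = |c| * l1p q := by
  have h : (Polynomial.C c * q).support ⊆ q.support := by
    rw [← smul_eq_C_mul]; exact Polynomial.support_smul c q
  rw [l1p_eq_sum h, l1p, Finset.mul_sum]
  exact Finset.sum_congr rfl fun k _ => by rw [Polynomial.coeff_C_mul, abs_mul]

lemma l1p_mul_le (a b : Polynomial ℝ) : l1p (a * b) ≤ l1p a * l1p b := by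
  classical
  have hsup : (a * b).support ⊆ Finset.range (a.natDegree + b.natDegree + 1) := by
    intro k hk
    simp only [Finset.mem_range]
    exact Nat.lt_succ_of_le ((Polynomial.le_natDegree_of_mem_supp _ hk).trans
      Polynomial.natDegree_mul_le)
  rw [l1p_eq_sum hsup]
  set N := a.natDegree + b.natDegree
  have hdisj : ((Finset.range (N+1) : Finset ℕ) : Set ℕ).PairwiseDisjoint Finset.HasAntidiagonal.antidiagonal := by
    intro m _ n _ hmn
    simp only [Finset.disjoint_left]
    intro p hp hp'
    exact hmn (by rw [← (Finset.HasAntidiagonal.mem_antidiagonal.mp hp), (Finset.HasAntidiagonal.mem_antidiagonal.mp hp')])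
  calc ∑ n ∈ Finset.range (N+1), |(a*b).coeff n|
      ≤ ∑ n ∈ Finset.range (N+1), ∑ q ∈ Finset.HasAntidiagonal.antidiagonal n,
          |a.coeff q.1| * |b.coeff q.2| := by
        refine Finset.sum_le_sum fun n _ => ?_
        rw [Polynomial.coeff_mul]
        exact (Finset.abs_sum_le_sum_abs _ _).trans (le_of_eq (by simp [abs_mul]))
    _ = ∑ q ∈ (Finset.range (N+1)).biUnion Finset.HasAntidiagonal.antidiagonal,
          |a.coeff q.1| * |b.coeff q.2| := (Finset.sum_biUnion hdisj).symm
    _ = ∑ q ∈ ((Finset.range (N+1)).biUnion Finset.HasAntidiagonal.antidiagonal) ∩ (a.support ×ˢ b.support),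
          |a.coeff q.1| * |b.coeff q.2| := by
        refine (Finset.sum_subset Finset.inter_subset_left fun q hq hq' => ?_).symm
        have : q.1 ∉ a.support ∨ q.2 ∉ b.support := by
          by_contra hc
          push_neg at hc
          exact hq' (Finset.mem_inter.mpr ⟨hq, Finset.mem_product.mpr hc⟩)
        rcases this with h | h
        · simp [Polynomial.notMem_support_iff.mp h]
        · simp [Polynomial.notMem_support_iff.mp h]
    _ ≤ ∑ q ∈ a.support ×ˢ b.support, |a.coeff q.1| * |b.coeff q.2| :=
        Finset.sum_le_sum_of_subset_of_nonneg Finset.inter_subset_right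
          (fun _ _ _ => mul_nonneg (abs_nonneg _) (abs_nonneg _))
    _ = l1p a * l1p b := by
        rw [l1p, l1p, Finset.sum_mul_sum, Finset.sum_product]

lemma l1p_one : l1p 1 = 1 := by
  have : (1 : Polynomial ℝ).support ⊆ {0} := by
    intro k hk
    simp only [Finset.mem_singleton]
    by_contra h
    exact Polynomial.mem_support_iff.mp hk (by simp [Polynomial.coeff_one, h])
  rw [l1p_eq_sum this]
  simp

lemma l1p_prod_le {ι : Type*} (F : Finset ι) (f : ι → Polynomial ℝ) :
    l1p (∏ i ∈ F, f i) ≤ ∏ i ∈ F, l1p (f i) := by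
  classical
  induction F using Finset.cons_induction with
  | empty => simp [l1p_one]
  | cons i F hi ih =>
    rw [Finset.prod_cons, Finset.prod_cons]
    exact (l1p_mul_le _ _).trans (mul_le_mul_of_nonneg_left ih (l1p_nonneg _))

lemma l1p_X_sub_C (a : ℝ) : l1p (Polynomial.X - Polynomial.C a) ≤ 1 + |a| := by
  have h : (Polynomial.X - Polynomial.C a).support ⊆ Finset.range 2 := by
    intro k hk
    have := Polynomial.le_natDegree_of_mem_supp _ hk
    have h2 : (Polynomial.X - Polynomial.C a).natDegree ≤ 1 := by
      simpa using Polynomial.natDegree_X_sub_C_le (a := a)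
    simp only [Finset.mem_range]
    omega
  rw [l1p_eq_sum h]
  rw [show (2:ℕ) = 1 + 1 from rfl, Finset.sum_range_succ, Finset.sum_range_one]
  simp [Polynomial.coeff_X_zero, Polynomial.coeff_X_one]
  ring_nf
  simp [abs_neg]

lemma l1p_basisDivisor {x z κ : ℝ} (hκ : 0 < κ) (hsep : κ ≤ |x - z|) (hz : |z| ≤ 1) :
    l1p (Lagrange.basisDivisor x z) ≤ 2 / κ := by
  rw [Lagrange.basisDivisor, l1p_C_mul]
  have hxz : 0 < |x - z| := lt_of_lt_of_le hκ hsep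
  have h1 : |(x - z)⁻¹| = |x - z|⁻¹ := abs_inv _
  have h2 : |x - z|⁻¹ ≤ κ⁻¹ := by
    exact inv_anti₀ hκ hsep
  have h3 : l1p (Polynomial.X - Polynomial.C z) ≤ 2 := (l1p_X_sub_C z).trans (by linarith)
  calc |(x - z)⁻¹| * l1p (Polynomial.X - Polynomial.C z)
      ≤ κ⁻¹ * 2 := by
        refine mul_le_mul (h1 ▸ h2) h3 (l1p_nonneg _) (by positivity)
    _ = 2 / κ := by field_simp
  
/-- Sum-of-coefficients bound for univariate interpolation: if `t_1,…,t_s ∈ [-1,1]` are distinct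
nodes with separation `κ > 0` and `p` is the (unique) polynomial of degree ≤ s-1 interpolating
the data `y`, then `Σ_{k=0}^{s-1} |c_k| ≤ (s(s+1)/2) ‖y‖_∞ (4/κ)^{s-1}`. -/
theorem stmt3 {s : ℕ} (hs : 2 ≤ s) (t : Fin s → ℝ)
    (ht : ∀ i, t i ∈ Set.Icc (-1 : ℝ) 1) (κ : ℝ) (hκ : 0 < κ)
    (hsep : ∀ i j, i ≠ j → κ ≤ |t i - t j|)
    (y : Fin s → ℝ) (p : Polynomial ℝ) (hdeg : p.natDegree ≤ s - 1)
    (hint : ∀ i, p.eval (t i) = y i) :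
    ∑ k ∈ Finset.range s, |p.coeff k| ≤ (s * (s + 1) : ℝ) / 2 * ‖y‖ * (4 / κ) ^ (s - 1) := by
  classical
  have hinj : Set.InjOn t (Finset.univ : Finset (Fin s)) := by
    intro i _ j _ hij
    by_contra h
    have := hsep i j h
    rw [show t i = t j from hij, sub_self, abs_zero] at this
    linarith
  have hdeg' : p.degree < (#(Finset.univ : Finset (Fin s)) : ℕ) := by
    rw [Finset.card_univ, Fintype.card_fin]
    calc p.degree ≤ (p.natDegree : WithBot ℕ) := Polynomial.degree_le_natDegree
      _ ≤ ((s - 1 : ℕ) : WithBot ℕ) := by exact_mod_cast hdeg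
      _ < (s : WithBot ℕ) := by exact_mod_cast (Nat.sub_lt (by omega) one_pos)
  have hp : p = Lagrange.interpolate Finset.univ t y :=
    Lagrange.eq_interpolate_of_eval_eq _ hinj hdeg' (fun i _ => hint i)
  -- bound l1p of each basis polynomial
  have hbasis : ∀ i : Fin s, l1p (Lagrange.basis Finset.univ t i) ≤ (2 / κ) ^ (s - 1) := by
    intro i
    rw [Lagrange.basis]
    calc l1p (∏ j ∈ Finset.univ.erase i, Lagrange.basisDivisor (t i) (t j))
        ≤ ∏ j ∈ Finset.univ.erase i, l1p (Lagrange.basisDivisor (t i) (t j)) :=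
          l1p_prod_le _ _
      _ ≤ ∏ _j ∈ Finset.univ.erase i, (2 / κ) := by
          refine Finset.prod_le_prod (fun _ _ => l1p_nonneg _) (fun j hj => ?_)
          have hij : i ≠ j := (Finset.ne_of_mem_erase hj).symm
          have hz : |t j| ≤ 1 := abs_le.mpr ⟨(ht j).1, (ht j).2⟩
          exact l1p_basisDivisor hκ (hsep i j hij) hz
      _ = (2 / κ) ^ (s - 1) := by
          rw [Finset.prod_const, Finset.card_erase_of_mem (Finset.mem_univ i),
            Finset.card_univ, Fintype.card_fin]
  have hnorm : ∀ i, |y i| ≤ ‖y‖ := fun i => by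
    simpa [Real.norm_eq_abs] using norm_le_pi_norm y i
  have hnn : (0:ℝ) ≤ ‖y‖ := norm_nonneg _
  have hsupp : p.support ⊆ Finset.range s := by
    intro k hk
    have := Polynomial.le_natDegree_of_mem_supp _ hk
    simp only [Finset.mem_range]
    omega
  have key : l1p p ≤ (s : ℝ) * ‖y‖ * (2 / κ) ^ (s - 1) := by
    rw [hp, Lagrange.interpolate_apply]
    calc l1p (∑ i ∈ Finset.univ, Polynomial.C (y i) * Lagrange.basis Finset.univ t i)
        ≤ ∑ i ∈ Finset.univ, l1p (Polynomial.C (y i) * Lagrange.basis Finset.univ t i) :=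
          l1p_sum_le _ _
      _ ≤ ∑ _i ∈ (Finset.univ : Finset (Fin s)), ‖y‖ * (2 / κ) ^ (s - 1) := by
          refine Finset.sum_le_sum fun i _ => ?_
          rw [l1p_C_mul]
          exact mul_le_mul (hnorm i) (hbasis i) (l1p_nonneg _) hnn
      _ = (s : ℝ) * ‖y‖ * (2 / κ) ^ (s - 1) := by
          rw [Finset.sum_const, Finset.card_univ, Fintype.card_fin, nsmul_eq_mul]
          ring
  rw [← l1p_eq_sum hsupp]
  refine key.trans ?_
  have h4 : (4 / κ) ^ (s - 1) = 2 ^ (s - 1) * (2 / κ) ^ (s - 1) := by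
    rw [← mul_pow]
    congr 1
    field_simp
    ring
  rw [h4]
  have h2p : (1:ℝ) ≤ 2 ^ (s - 1) := one_le_pow₀ (by norm_num)
  have hκp : (0:ℝ) ≤ (2 / κ) ^ (s - 1) := by positivity
  have hss : (s : ℝ) ≤ (s * (s + 1) : ℝ) / 2 * 2 ^ (s - 1) := by
    have hs' : (2:ℝ) ≤ (s:ℝ) := by exact_mod_cast hs
    have h5 : (s:ℝ)*((s:ℝ)+1)/2 * 1 ≤ (s:ℝ)*((s:ℝ)+1)/2 * 2 ^ (s-1) :=
      mul_le_mul_of_nonneg_left h2p (by positivity)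
    nlinarith
  calc (s : ℝ) * ‖y‖ * (2 / κ) ^ (s - 1)
      ≤ ((s * (s + 1) : ℝ) / 2 * 2 ^ (s - 1)) * ‖y‖ * (2 / κ) ^ (s - 1) := by
        refine mul_le_mul_of_nonneg_right (mul_le_mul_of_nonneg_right hss hnn) hκp
    _ = (s * (s + 1) : ℝ) / 2 * ‖y‖ * (2 ^ (s - 1) * (2 / κ) ^ (s - 1)) := by ring
end

section
/- Let Z = {z_1,…,z_s} ⊂ ℝ^n be s ≥ 2 distinct points with ‖z_i‖₂ ≤ 1 for all i, and let N ≥ s − 1. For each j ∈ {1,…,s} there exists a polynomial Q_j ∈ ℝ[x_1,…,x_n] of total degree at most N such that Q_j(z_i) = δ_{ij} for all i = 1,…,s, and every coefficient of Q_j in the monomial basis is bounded in absolute value by s · (4n/ρ(Z,j))^{s−1}. -/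
open MvPolynomial
open scoped Pointwise

noncomputable def myL1 {σ : Type*} (P : MvPolynomial σ ℝ) : ℝ :=
  ∑ α ∈ P.support, |P.coeff α|

lemma myL1_nonneg {σ : Type*} (P : MvPolynomial σ ℝ) : 0 ≤ myL1 P :=
  Finset.sum_nonneg fun _ _ => abs_nonneg _

lemma abs_coeff_le_myL1 {σ : Type*} (P : MvPolynomial σ ℝ) (α : σ →₀ ℕ) :
    |P.coeff α| ≤ myL1 P := by
  by_cases h : α ∈ P.support
  · exact Finset.single_le_sum (f := fun α => |P.coeff α|) (fun _ _ => abs_nonneg _) h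
  · rw [MvPolynomial.notMem_support_iff.mp h, abs_zero]; exact myL1_nonneg P

lemma myL1_eq_sum {σ : Type*} (P : MvPolynomial σ ℝ) (T : Finset (σ →₀ ℕ))
    (hT : P.support ⊆ T) : myL1 P = ∑ α ∈ T, |P.coeff α| :=
  Finset.sum_subset hT (fun x _ hx => by
    rw [MvPolynomial.notMem_support_iff.mp hx, abs_zero])

lemma myL1_monomial_le {σ : Type*} (d : σ →₀ ℕ) (a : ℝ) :
    myL1 (monomial d a) ≤ |a| := by
  classical
  unfold myL1
  by_cases h : a = 0
  · simp [h]
  · rw [MvPolynomial.support_monomial, if_neg h, Finset.sum_singleton,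
      MvPolynomial.coeff_monomial, if_pos rfl]

lemma myL1_mul_le {σ : Type*} [DecidableEq σ] (P Q : MvPolynomial σ ℝ) :
    myL1 (P * Q) ≤ myL1 P * myL1 Q := by
  classical
  set A := P.support
  set B := Q.support
  have h1 : myL1 (P * Q) ≤ ∑ α ∈ A + B, |(P * Q).coeff α| := by
    refine (le_of_eq rfl).trans ?_
    refine Finset.sum_le_sum_of_subset_of_nonneg (MvPolynomial.support_mul P Q)
      (fun _ _ _ => abs_nonneg _)
  have h2 : ∀ α, |(P * Q).coeff α| ≤
      ∑ x ∈ (A ×ˢ B).filter (fun x => x.1 + x.2 = α), |P.coeff x.1| * |Q.coeff x.2| := by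
    intro α
    rw [MvPolynomial.coeff_mul]
    calc |∑ x ∈ Finset.HasAntidiagonal.antidiagonal α, P.coeff x.1 * Q.coeff x.2|
        ≤ ∑ x ∈ Finset.HasAntidiagonal.antidiagonal α, |P.coeff x.1 * Q.coeff x.2| :=
          Finset.abs_sum_le_sum_abs _ _
      _ = ∑ x ∈ Finset.HasAntidiagonal.antidiagonal α, |P.coeff x.1| * |Q.coeff x.2| := by
          simp [abs_mul]
      _ = ∑ x ∈ (A ×ˢ B).filter (fun x => x.1 + x.2 = α),
            |P.coeff x.1| * |Q.coeff x.2| := by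
          refine (Finset.sum_subset ?_ ?_).symm
          · intro x hx
            rw [Finset.HasAntidiagonal.mem_antidiagonal]
            exact (Finset.mem_filter.mp hx).2
          · intro x hx hx'
            rw [Finset.HasAntidiagonal.mem_antidiagonal] at hx
            have : x ∉ A ×ˢ B := fun hmem => hx' (Finset.mem_filter.mpr ⟨hmem, hx⟩)
            rw [Finset.mem_product] at this
            push_neg at this
            rcases Decidable.em (x.1 ∈ A) with hA | hA
            · rw [MvPolynomial.notMem_support_iff.mp (this hA), abs_zero, mul_zero]
            · rw [MvPolynomial.notMem_support_iff.mp hA, abs_zero, zero_mul]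
  calc myL1 (P * Q) ≤ ∑ α ∈ A + B, |(P * Q).coeff α| := h1
    _ ≤ ∑ α ∈ A + B, ∑ x ∈ (A ×ˢ B).filter (fun x => x.1 + x.2 = α),
          |P.coeff x.1| * |Q.coeff x.2| := Finset.sum_le_sum (fun α _ => h2 α)
    _ = ∑ x ∈ A ×ˢ B, |P.coeff x.1| * |Q.coeff x.2| :=
        Finset.sum_fiberwise_of_maps_to (fun x hx => by
          rw [Finset.mem_product] at hx
          exact Finset.add_mem_add hx.1 hx.2) _
    _ = myL1 P * myL1 Q := by
        rw [Finset.sum_product, myL1, myL1, Finset.sum_mul_sum]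

lemma myL1_add_le {σ : Type*} (P Q : MvPolynomial σ ℝ) :
    myL1 (P + Q) ≤ myL1 P + myL1 Q := by
  classical
  have h : myL1 (P + Q) ≤ ∑ α ∈ P.support ∪ Q.support, |(P + Q).coeff α| :=
    Finset.sum_le_sum_of_subset_of_nonneg (MvPolynomial.support_add)
      (fun _ _ _ => abs_nonneg _)
  refine h.trans ?_
  rw [myL1_eq_sum P _ Finset.subset_union_left,
    myL1_eq_sum Q _ Finset.subset_union_right, ← Finset.sum_add_distrib]
  exact Finset.sum_le_sum fun α _ => by rw [MvPolynomial.coeff_add]; exact abs_add_le _ _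

lemma myL1_prod_le {σ ι : Type*} [DecidableEq σ] (t : Finset ι) (f : ι → MvPolynomial σ ℝ) :
    myL1 (∏ i ∈ t, f i) ≤ ∏ i ∈ t, myL1 (f i) := by
  classical
  induction t using Finset.cons_induction with
  | empty => simpa using (myL1_monomial_le (0 : σ →₀ ℕ) (1:ℝ)).trans (by norm_num)
  | cons a t ha ih =>
    rw [Finset.prod_cons, Finset.prod_cons]
    calc myL1 (f a * ∏ i ∈ t, f i) ≤ myL1 (f a) * myL1 (∏ i ∈ t, f i) := myL1_mul_le _ _
      _ ≤ myL1 (f a) * ∏ i ∈ t, myL1 (f i) :=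
          mul_le_mul_of_nonneg_left ih (myL1_nonneg _)

lemma myL1_sum_le {σ ι : Type*} (t : Finset ι) (f : ι → MvPolynomial σ ℝ) :
    myL1 (∑ i ∈ t, f i) ≤ ∑ i ∈ t, myL1 (f i) := by
  classical
  induction t using Finset.cons_induction with
  | empty => simpa [myL1] using le_refl (0:ℝ)
  | cons a t ha ih =>
    rw [Finset.sum_cons, Finset.sum_cons]
    exact (myL1_add_le _ _).trans (add_le_add_right ih _)

lemma myL1_C_le (a : ℝ) {σ : Type*} : myL1 (C a : MvPolynomial σ ℝ) ≤ |a| := by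
  rw [MvPolynomial.C_apply]; exact myL1_monomial_le _ _

lemma myL1_X_le {σ : Type*} (ℓ : σ) : myL1 (X ℓ : MvPolynomial σ ℝ) ≤ 1 := by
  have h : (X ℓ : MvPolynomial σ ℝ) = monomial (Finsupp.single ℓ 1) 1 := rfl
  rw [h]
  simpa using myL1_monomial_le (Finsupp.single ℓ 1) (1:ℝ)

lemma ciInf_finite_attained {ι : Type*} [Nonempty ι] [Finite ι] (f : ι → ℝ) :
    ∃ i₀, (⨅ i, f i) = f i₀ ∧ ∀ i, f i₀ ≤ f i := by
  obtain ⟨i₀, hi₀⟩ := Finite.exists_min f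
  exact ⟨i₀, le_antisymm
    (ciInf_le ⟨f i₀, by rintro y ⟨i, rfl⟩; exact hi₀ i⟩ i₀) (le_ciInf hi₀), hi₀⟩


open scoped RealInnerProductSpace

/-- The max–min projection separation `ρ(Z,j)`. -/
noncomputable def rho {n s : ℕ} (z : Fin s → EuclideanSpace ℝ (Fin n)) (j : Fin s) : ℝ :=
  ⨆ v : Metric.sphere (0 : EuclideanSpace ℝ (Fin n)) 1,
    ⨅ i : {i : Fin s // i ≠ j}, |(⟪(v : EuclideanSpace ℝ (Fin n)), z j - z i.1⟫ : ℝ)|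

/-- Existence of coefficient-controlled multivariate Lagrange polynomials: for distinct points
`z_1,…,z_s` in the closed unit ball of ℝⁿ and `N ≥ s-1`, for each `j` there is a polynomial
`Q_j` of total degree ≤ N with `Q_j(z_i) = δ_{ij}` whose monomial coefficients are bounded by
`s (4n/ρ(Z,j))^{s-1}`. -/
theorem stmt6 {n s : ℕ} (hs : 2 ≤ s) (z : Fin s → EuclideanSpace ℝ (Fin n))
    (hz : Function.Injective z) (hball : ∀ i, ‖z i‖ ≤ 1) (N : ℕ) (hN : s - 1 ≤ N)
    (j : Fin s) :
    ∃ Q : MvPolynomial (Fin n) ℝ, Q.totalDegree ≤ N ∧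
      (∀ i, MvPolynomial.eval (fun ℓ => z i ℓ) Q = if i = j then 1 else 0) ∧
      ∀ α : Fin n →₀ ℕ, |Q.coeff α| ≤ (s : ℝ) * (4 * n / rho z j) ^ (s - 1) := by
  classical
  haveI : Nontrivial (Fin s) := Fin.nontrivial_iff_two_le.mpr hs
  obtain ⟨i₁, hi₁⟩ := exists_ne j
  have hn : 0 < n := by
    rcases Nat.eq_zero_or_pos n with rfl | h
    · exact absurd (hz (PiLp.ext fun ℓ => Fin.elim0 ℓ)) hi₁
    · exact h
  haveI : Nonempty {i : Fin s // i ≠ j} := ⟨⟨i₁, hi₁⟩⟩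
  -- the linear polynomial associated to a vector
  set lin : EuclideanSpace ℝ (Fin n) → MvPolynomial (Fin n) ℝ :=
    fun w => ∑ ℓ : Fin n, MvPolynomial.C (w ℓ) * MvPolynomial.X ℓ with hlin
  have coeff_lin : ∀ (w : EuclideanSpace ℝ (Fin n)) (ℓ0 : Fin n),
      (lin w).coeff (Finsupp.single ℓ0 1) = w ℓ0 := by
    intro w ℓ0
    rw [hlin]
    rw [MvPolynomial.coeff_sum]
    rw [Finset.sum_eq_single ℓ0
      (fun b _ hb => by
        rw [MvPolynomial.coeff_C_mul, MvPolynomial.coeff_X',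
          if_neg (fun h => hb ((Finsupp.single_left_inj one_ne_zero).mp h)), mul_zero])
      (fun h => absurd (Finset.mem_univ _) h)]
    rw [MvPolynomial.coeff_C_mul, MvPolynomial.coeff_X', if_pos rfl, mul_one]
  have eval_lin : ∀ (w : EuclideanSpace ℝ (Fin n)) (x : Fin n → ℝ),
      MvPolynomial.eval x (lin w) = ∑ ℓ, w ℓ * x ℓ := by
    intro w x; rw [hlin]; simp
  have inner_eq : ∀ (w x : EuclideanSpace ℝ (Fin n)),
      (⟪w, x⟫ : ℝ) = ∑ ℓ, w ℓ * x ℓ := by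
    intro w x
    rw [PiLp.inner_apply]
    simp [RCLike.inner_apply, mul_comm]
  have hzd : ∀ i : Fin s, i ≠ j → z j - z i ≠ 0 := by
    intro i hij h
    exact hij (hz (sub_eq_zero.mp h)).symm
  -- find a direction not orthogonal to any difference
  have hexists : ∃ x : Fin n → ℝ, ∀ i ∈ Finset.univ.erase j,
      MvPolynomial.eval x (lin (z j - z i)) ≠ 0 := by
    by_contra hcon
    push_neg at hcon
    have hR0 : (∏ i ∈ Finset.univ.erase j, lin (z j - z i)) = 0 := by
      apply MvPolynomial.funext (q := 0)
      intro x
      obtain ⟨i, hi, hi0⟩ := hcon x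
      rw [map_prod, map_zero]
      exact Finset.prod_eq_zero hi hi0
    have hRne : (∏ i ∈ Finset.univ.erase j, lin (z j - z i)) ≠ 0 := by
      rw [Finset.prod_ne_zero_iff]
      intro i hi
      have hne := hzd i (Finset.mem_erase.mp hi).1
      have : ∃ ℓ0, (z j - z i) ℓ0 ≠ 0 := by
        by_contra hall
        push_neg at hall
        exact hne (PiLp.ext hall)
      obtain ⟨ℓ0, hℓ0⟩ := this
      intro h0
      apply hℓ0
      rw [← coeff_lin (z j - z i) ℓ0, h0, MvPolynomial.coeff_zero]
    exact hRne hR0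
  obtain ⟨x0, hx0⟩ := hexists
  set xE : EuclideanSpace ℝ (Fin n) := WithLp.toLp 2 x0 with hxE
  have hi₁mem : i₁ ∈ Finset.univ.erase j := Finset.mem_erase.mpr ⟨hi₁, Finset.mem_univ _⟩
  have hxne : xE ≠ 0 := by
    intro h0
    apply hx0 i₁ hi₁mem
    rw [eval_lin]
    refine Finset.sum_eq_zero fun ℓ _ => ?_
    have hz0 : xE ℓ = 0 := by rw [h0]; rfl
    rw [show x0 ℓ = xE ℓ from rfl, hz0, mul_zero]
  set u : EuclideanSpace ℝ (Fin n) := ‖xE‖⁻¹ • xE with hu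
  have hunorm : ‖u‖ = 1 := by
    rw [hu, norm_smul, norm_inv, norm_norm]
    exact inv_mul_cancel₀ (norm_ne_zero_iff.mpr hxne)
  have humem : u ∈ Metric.sphere (0 : EuclideanSpace ℝ (Fin n)) 1 :=
    mem_sphere_zero_iff_norm.mpr hunorm
  have hinner_u : ∀ i : Fin s, i ≠ j → (⟪u, z j - z i⟫ : ℝ) ≠ 0 := by
    intro i hij
    rw [hu, real_inner_smul_left]
    refine mul_ne_zero (inv_ne_zero (norm_ne_zero_iff.mpr hxne)) ?_
    have h5 := hx0 i (Finset.mem_erase.mpr ⟨hij, Finset.mem_univ _⟩)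
    rw [eval_lin] at h5
    rw [real_inner_comm, inner_eq]
    exact h5
  -- the sup defining rho
  set Fv : Metric.sphere (0 : EuclideanSpace ℝ (Fin n)) 1 → ℝ :=
    fun v => ⨅ i : {i : Fin s // i ≠ j},
      |(⟪(v : EuclideanSpace ℝ (Fin n)), z j - z i.1⟫ : ℝ)| with hFv
  have hrho : rho z j = ⨆ v, Fv v := rfl
  have hbdd0 : ∀ v, BddBelow (Set.range fun i : {i : Fin s // i ≠ j} =>
      |(⟪(v : EuclideanSpace ℝ (Fin n)), z j - z i.1⟫ : ℝ)|) := by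
    intro v
    exact ⟨0, by rintro y ⟨i, rfl⟩; exact abs_nonneg _⟩
  have hFpos : 0 < Fv ⟨u, humem⟩ := by
    obtain ⟨i₀, heq, -⟩ := ciInf_finite_attained
      (fun i : {i : Fin s // i ≠ j} => |(⟪u, z j - z i.1⟫ : ℝ)|)
    rw [hFv]
    simp only
    rw [heq]
    exact abs_pos.mpr (hinner_u i₀.1 i₀.2)
  have hbdd : BddAbove (Set.range Fv) := by
    refine ⟨2, ?_⟩
    rintro y ⟨v, rfl⟩
    have h1 : Fv v ≤ |(⟪(v : EuclideanSpace ℝ (Fin n)), z j - z i₁⟫ : ℝ)| :=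
      ciInf_le (hbdd0 v) ⟨i₁, hi₁⟩
    refine h1.trans ?_
    calc |(⟪(v : EuclideanSpace ℝ (Fin n)), z j - z i₁⟫ : ℝ)|
        ≤ ‖(v : EuclideanSpace ℝ (Fin n))‖ * ‖z j - z i₁‖ := abs_real_inner_le_norm _ _
      _ ≤ 1 * 2 := by
          refine mul_le_mul (le_of_eq (mem_sphere_zero_iff_norm.mp v.2)) ?_
            (norm_nonneg _) zero_le_one
          exact (norm_sub_le _ _).trans (by linarith [hball j, hball i₁])
      _ = 2 := one_mul 2
  have hrhopos : 0 < rho z j := by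
    rw [hrho]
    exact lt_of_lt_of_le hFpos (le_ciSup hbdd ⟨u, humem⟩)
  haveI : Nonempty (Metric.sphere (0 : EuclideanSpace ℝ (Fin n)) 1) := ⟨⟨u, humem⟩⟩
  obtain ⟨v, hv⟩ := exists_lt_of_lt_ciSup
    (show rho z j / 2 < ⨆ v, Fv v by rw [← hrho]; linarith)
  set vE : EuclideanSpace ℝ (Fin n) := (v : EuclideanSpace ℝ (Fin n)) with hvE
  have hvnorm : ‖vE‖ = 1 := mem_sphere_zero_iff_norm.mp v.2
  have hdlow : ∀ i : Fin s, i ≠ j → rho z j / 2 < |(⟪vE, z j - z i⟫ : ℝ)| := by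
    intro i hij
    exact lt_of_lt_of_le hv (ciInf_le (hbdd0 v) ⟨i, hij⟩)
  set d : Fin s → ℝ := fun i => (⟪vE, z j - z i⟫ : ℝ) with hd
  have hd0 : ∀ i : Fin s, i ≠ j → d i ≠ 0 := by
    intro i hij
    have := hdlow i hij
    intro h
    rw [hd] at h
    simp only at h
    rw [h, abs_zero] at this
    linarith
  -- the polynomial
  set Q : MvPolynomial (Fin n) ℝ := ∏ i ∈ Finset.univ.erase j,
    (MvPolynomial.C (d i)⁻¹ * (lin vE - MvPolynomial.C (⟪vE, z i⟫ : ℝ))) with hQ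
  have hcard : (Finset.univ.erase j).card = s - 1 := by
    rw [Finset.card_erase_of_mem (Finset.mem_univ _), Finset.card_univ, Fintype.card_fin]
  have hlindeg : ∀ w, (lin w).totalDegree ≤ 1 := by
    intro w
    rw [hlin]
    refine (MvPolynomial.totalDegree_finset_sum _ _).trans (Finset.sup_le fun ℓ _ => ?_)
    refine (MvPolynomial.totalDegree_mul _ _).trans ?_
    simp [MvPolynomial.totalDegree_C, MvPolynomial.totalDegree_X]
  refine ⟨Q, ?_, ?_, ?_⟩
  · -- total degree
    refine (MvPolynomial.totalDegree_finset_prod _ _).trans ?_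
    have hone : ∀ i ∈ Finset.univ.erase j,
        (MvPolynomial.C (d i)⁻¹ *
          (lin vE - MvPolynomial.C (⟪vE, z i⟫ : ℝ))).totalDegree ≤ 1 := by
      intro i _
      refine (MvPolynomial.totalDegree_mul _ _).trans ?_
      rw [MvPolynomial.totalDegree_C, zero_add, sub_eq_add_neg, ← map_neg]
      exact (MvPolynomial.totalDegree_add _ _).trans
        (max_le (hlindeg vE) (by rw [MvPolynomial.totalDegree_C]; exact Nat.zero_le 1))
    calc ∑ i ∈ Finset.univ.erase j,
          (MvPolynomial.C (d i)⁻¹ *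
            (lin vE - MvPolynomial.C (⟪vE, z i⟫ : ℝ))).totalDegree
        ≤ ∑ _i ∈ Finset.univ.erase j, (1:ℕ) := by exact Finset.sum_le_sum hone
      _ = s - 1 := by rw [Finset.sum_const, smul_eq_mul, mul_one, hcard]
      _ ≤ N := hN
  · -- evaluation
    intro i0
    have heval : ∀ i : Fin s, MvPolynomial.eval (fun ℓ => z i0 ℓ)
        (MvPolynomial.C (d i)⁻¹ * (lin vE - MvPolynomial.C (⟪vE, z i⟫ : ℝ)))
        = (d i)⁻¹ * ((⟪vE, z i0⟫ : ℝ) - (⟪vE, z i⟫ : ℝ)) := by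
      intro i
      rw [map_mul, map_sub, MvPolynomial.eval_C, MvPolynomial.eval_C, eval_lin]
      rw [inner_eq vE (z i0)]
    rw [hQ, map_prod]
    by_cases hij : i0 = j
    · subst hij
      rw [if_pos rfl]
      refine Finset.prod_eq_one fun i hi => ?_
      rw [heval i]
      have : (⟪vE, z i0⟫ : ℝ) - (⟪vE, z i⟫ : ℝ) = d i := by
        rw [hd]; simp only; rw [inner_sub_right]
      rw [this]
      exact inv_mul_cancel₀ (hd0 i (Finset.mem_erase.mp hi).1)
    · rw [if_neg hij]
      refine Finset.prod_eq_zero (Finset.mem_erase.mpr ⟨hij, Finset.mem_univ _⟩) ?_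
      rw [heval i0, sub_self, mul_zero]
  · -- coefficient bound
    intro α
    have hcoord : ∀ ℓ, |vE ℓ| ≤ 1 := by
      intro ℓ
      have h1 : (⟪EuclideanSpace.single ℓ (1:ℝ), vE⟫ : ℝ) = vE ℓ := by
        rw [EuclideanSpace.inner_single_left]
        simp
      calc |vE ℓ| = |(⟪EuclideanSpace.single ℓ (1:ℝ), vE⟫ : ℝ)| := by rw [h1]
        _ ≤ ‖EuclideanSpace.single ℓ (1:ℝ)‖ * ‖vE‖ := abs_real_inner_le_norm _ _
        _ = 1 := by rw [EuclideanSpace.norm_single, hvnorm]; simp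
    have hlinl1 : myL1 (lin vE) ≤ (n : ℝ) := by
      rw [hlin]
      refine (myL1_sum_le _ _).trans ?_
      calc ∑ ℓ : Fin n, myL1 (MvPolynomial.C (vE ℓ) * MvPolynomial.X ℓ)
          ≤ ∑ ℓ : Fin n, (1 : ℝ) := by
            refine Finset.sum_le_sum fun ℓ _ => ?_
            refine (myL1_mul_le _ _).trans ?_
            calc myL1 (MvPolynomial.C (vE ℓ)) * myL1 (MvPolynomial.X ℓ)
                ≤ |vE ℓ| * 1 := mul_le_mul (myL1_C_le _) (myL1_X_le ℓ)
                  (myL1_nonneg _) (abs_nonneg _)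
              _ ≤ 1 := by rw [mul_one]; exact hcoord ℓ
        _ = (n : ℝ) := by simp
    have hfac : ∀ i : Fin s, i ≠ j →
        myL1 (MvPolynomial.C (d i)⁻¹ * (lin vE - MvPolynomial.C (⟪vE, z i⟫ : ℝ)))
          ≤ 4 * n / rho z j := by
      intro i hij
      have hb : |(⟪vE, z i⟫ : ℝ)| ≤ 1 := by
        calc |(⟪vE, z i⟫ : ℝ)| ≤ ‖vE‖ * ‖z i‖ := abs_real_inner_le_norm _ _
          _ ≤ 1 * 1 := by rw [hvnorm]; exact mul_le_mul_of_nonneg_left (hball i) zero_le_one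
          _ = 1 := one_mul 1
      have hsub : myL1 (lin vE - MvPolynomial.C (⟪vE, z i⟫ : ℝ)) ≤ (n : ℝ) + 1 := by
        rw [sub_eq_add_neg, ← map_neg]
        refine (myL1_add_le _ _).trans ?_
        refine add_le_add hlinl1 ((myL1_C_le _).trans ?_)
        rw [abs_neg]; exact hb
      have hdinv : |(d i)⁻¹| ≤ 2 / rho z j := by
        rw [abs_inv]
        have h2 : rho z j / 2 ≤ |d i| := (hdlow i hij).le
        have h3 : (0:ℝ) < rho z j / 2 := by linarith
        calc |d i|⁻¹ ≤ (rho z j / 2)⁻¹ := by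
              exact inv_anti₀ h3 h2
          _ = 2 / rho z j := by rw [inv_div]
      refine (myL1_mul_le _ _).trans ?_
      calc myL1 (MvPolynomial.C (d i)⁻¹) * myL1 (lin vE - MvPolynomial.C (⟪vE, z i⟫ : ℝ))
          ≤ |(d i)⁻¹| * ((n : ℝ) + 1) := mul_le_mul (myL1_C_le _) hsub
            (myL1_nonneg _) (abs_nonneg _)
        _ ≤ (2 / rho z j) * (2 * n) := by
            refine mul_le_mul hdinv ?_ (by positivity) (by positivity)
            have : (1:ℝ) ≤ n := by exact_mod_cast hn
            linarith
        _ = 4 * n / rho z j := by field_simp; ring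
    have hfinal : |Q.coeff α| ≤ (4 * n / rho z j) ^ (s - 1) := by
      refine (abs_coeff_le_myL1 Q α).trans ?_
      rw [hQ]
      refine (myL1_prod_le _ _).trans ?_
      calc ∏ i ∈ Finset.univ.erase j,
            myL1 (MvPolynomial.C (d i)⁻¹ * (lin vE - MvPolynomial.C (⟪vE, z i⟫ : ℝ)))
          ≤ ∏ i ∈ Finset.univ.erase j, (4 * n / rho z j) :=
            Finset.prod_le_prod (fun i _ => myL1_nonneg _)
              (fun i hi => hfac i (Finset.mem_erase.mp hi).1)
        _ = (4 * n / rho z j) ^ (s - 1) := by rw [Finset.prod_const, hcard]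
    refine hfinal.trans ?_
    refine le_mul_of_one_le_left (pow_nonneg ?_ _) ?_
    · exact div_nonneg (by positivity) hrhopos.le
    · exact_mod_cast hs.trans' (by norm_num)
end

section
/- Let Z = {z_1,…,z_s} ⊂ ℝ^n be s ≥ 2 distinct points with ‖z_i‖₂ ≤ 1, fix j, and let v be a unit vector with |⟨v, z_j − z_i⟩| ≥ ρ(Z,j) for all i ≠ j. Define Q_j(z) = p_j(⟨v,z⟩) where p_j is the univariate Lagrange polynomial through the nodes t_i = ⟨v, z_i⟩ with p_j(t_i) = δ_{ij}. Then Q_j has total degree ≤ s−1, satisfies Q_j(z_i) = δ_{ij}, and each monomial coefficient c_{j,α} of Q_j satisfies |c_{j,α}| ≤ (2n/ρ(Z,j))^{s−1}. -/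
open scoped RealInnerProductSpace BigOperators

section NRM
open MvPolynomial
set_option linter.unusedSectionVars false
namespace Stmt7Aux
variable {σ : Type*} [DecidableEq σ]

noncomputable def nrm (P : MvPolynomial σ ℝ) : ℝ := ∑ α ∈ P.support, |P.coeff α|

theorem nrm_nonneg (P : MvPolynomial σ ℝ) : 0 ≤ nrm P := Finset.sum_nonneg fun _ _ => abs_nonneg _

theorem nrm_eq_sum_of_subset {P : MvPolynomial σ ℝ} {S : Finset (σ →₀ ℕ)}
    (h : P.support ⊆ S) : nrm P = ∑ α ∈ S, |P.coeff α| := by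
  refine Finset.sum_subset h fun α _ hα => ?_
  rw [MvPolynomial.notMem_support_iff.mp hα, abs_zero]

theorem abs_coeff_le_nrm (P : MvPolynomial σ ℝ) (α : σ →₀ ℕ) : |P.coeff α| ≤ nrm P := by
  by_cases h : α ∈ P.support
  · exact Finset.single_le_sum (f := fun β => |P.coeff β|) (fun i _ => abs_nonneg _) h
  · rw [MvPolynomial.notMem_support_iff.mp h, abs_zero]; exact nrm_nonneg P

theorem nrm_monomial (d : σ →₀ ℕ) (a : ℝ) : nrm (monomial d a) = |a| := by
  classical
  by_cases h : a = 0
  · simp [nrm, h]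
  · rw [nrm, MvPolynomial.support_monomial, if_neg h, Finset.sum_singleton,
      MvPolynomial.coeff_monomial, if_pos rfl]

theorem nrm_C (a : ℝ) : nrm (C (σ := σ) a) = |a| := by
  rw [← MvPolynomial.monomial_zero', nrm_monomial]

theorem nrm_mul_le (P Q : MvPolynomial σ ℝ) : nrm (P * Q) ≤ nrm P * nrm Q := by
  classical
  have h1 : nrm (P * Q) ≤
      ∑ α ∈ (P * Q).support, ∑ x ∈ Finset.HasAntidiagonal.antidiagonal α, |P.coeff x.1| * |Q.coeff x.2| := by
    refine Finset.sum_le_sum fun α _ => ?_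
    rw [MvPolynomial.coeff_mul]
    refine (Finset.abs_sum_le_sum_abs _ _).trans ?_
    exact le_of_eq (Finset.sum_congr rfl fun x _ => abs_mul _ _)
  have h2 : ∑ α ∈ (P * Q).support, ∑ x ∈ Finset.HasAntidiagonal.antidiagonal α, |P.coeff x.1| * |Q.coeff x.2|
      = ∑ x ∈ (P * Q).support.biUnion Finset.HasAntidiagonal.antidiagonal, |P.coeff x.1| * |Q.coeff x.2| := by
    rw [Finset.sum_biUnion]
    intro a _ b _ hab
    simp only [Function.onFun]
    rw [Finset.disjoint_left]
    intro x hxa hxb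
    rw [Finset.HasAntidiagonal.mem_antidiagonal] at hxa hxb
    exact hab (hxa ▸ hxb)
  have h3 : ∑ x ∈ (P * Q).support.biUnion Finset.HasAntidiagonal.antidiagonal, |P.coeff x.1| * |Q.coeff x.2|
      ≤ ∑ x ∈ P.support ×ˢ Q.support, |P.coeff x.1| * |Q.coeff x.2| := by
    have e1 : ∑ x ∈ (P * Q).support.biUnion Finset.HasAntidiagonal.antidiagonal, |P.coeff x.1| * |Q.coeff x.2|
        = ∑ x ∈ ((P * Q).support.biUnion Finset.HasAntidiagonal.antidiagonal) ∩ (P.support ×ˢ Q.support),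
            |P.coeff x.1| * |Q.coeff x.2| := by
      refine (Finset.sum_subset Finset.inter_subset_left fun x hx hx' => ?_).symm
      have : x ∉ P.support ×ˢ Q.support := fun h => hx' (Finset.mem_inter.mpr ⟨hx, h⟩)
      rw [Finset.mem_product] at this
      rcases not_and_or.mp this with h | h
      · rw [MvPolynomial.notMem_support_iff.mp h, abs_zero, zero_mul]
      · rw [MvPolynomial.notMem_support_iff.mp h, abs_zero, mul_zero]
    rw [e1]
    exact Finset.sum_le_sum_of_subset_of_nonneg Finset.inter_subset_right
      fun _ _ _ => mul_nonneg (abs_nonneg _) (abs_nonneg _)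
  have h4 : ∑ x ∈ P.support ×ˢ Q.support, |P.coeff x.1| * |Q.coeff x.2| = nrm P * nrm Q := by
    rw [Finset.sum_product, nrm, nrm, Finset.sum_mul_sum]
  exact h1.trans (h2 ▸ h3.trans_eq h4)

theorem nrm_one : nrm (1 : MvPolynomial σ ℝ) = 1 := by
  rw [show (1 : MvPolynomial σ ℝ) = C 1 from rfl, nrm_C, abs_one]

theorem nrm_prod_le {ι : Type*} (S : Finset ι) (f : ι → MvPolynomial σ ℝ) :
    nrm (∏ i ∈ S, f i) ≤ ∏ i ∈ S, nrm (f i) := by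
  classical
  induction S using Finset.cons_induction with
  | empty => simp [nrm_one]
  | cons a S ha ih =>
    rw [Finset.prod_cons, Finset.prod_cons]
    exact (nrm_mul_le _ _).trans (mul_le_mul_of_nonneg_left ih (nrm_nonneg _))

theorem nrm_add_le (P Q : MvPolynomial σ ℝ) : nrm (P + Q) ≤ nrm P + nrm Q := by
  classical
  rw [nrm_eq_sum_of_subset (S := P.support ∪ Q.support)
    (MvPolynomial.support_add (p := P) (q := Q)),
    nrm_eq_sum_of_subset (S := P.support ∪ Q.support) Finset.subset_union_left,
    nrm_eq_sum_of_subset (S := P.support ∪ Q.support) Finset.subset_union_right,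
    ← Finset.sum_add_distrib]
  exact Finset.sum_le_sum fun α _ => by rw [MvPolynomial.coeff_add]; exact abs_add_le _ _

theorem nrm_sum_le {ι : Type*} (S : Finset ι) (f : ι → MvPolynomial σ ℝ) :
    nrm (∑ i ∈ S, f i) ≤ ∑ i ∈ S, nrm (f i) := by
  classical
  induction S using Finset.cons_induction with
  | empty => simp [nrm, MvPolynomial.coeff_zero]
  | cons a S ha ih =>
    rw [Finset.sum_cons, Finset.sum_cons]
    exact (nrm_add_le _ _).trans (by linarith)

end Stmt7Aux
end NRM


theorem Stmt7Aux.rho_pos {n s : ℕ} (hs : 2 ≤ s) (z : Fin s → EuclideanSpace ℝ (Fin n))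
    (hz : Function.Injective z) (hball : ∀ i, ‖z i‖ ≤ 1) (j : Fin s) : 0 < rho z j := by
  haveI : Nontrivial (Fin s) := ⟨⟨0, by omega⟩, ⟨1, by omega⟩, by simp [Fin.ext_iff]⟩
  haveI hne : Nonempty {i : Fin s // i ≠ j} := by
    obtain ⟨i, hi⟩ := exists_ne j; exact ⟨⟨i, hi⟩⟩
  set w : {i : Fin s // i ≠ j} → EuclideanSpace ℝ (Fin n) := fun i => z j - z i.1 with hw
  have hwne : ∀ i, w i ≠ 0 := fun i =>
    sub_ne_zero_of_ne fun h => i.2 (hz h).symm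
  have hexists : ∃ v₀ : EuclideanSpace ℝ (Fin n), ∀ i, ⟪w i, v₀⟫ ≠ 0 := by
    by_contra hcon
    push_neg at hcon
    have hcover : ⋃ i : {i : Fin s // i ≠ j},
        ((LinearMap.ker ((innerSL ℝ (w i)).toLinearMap) :
            Subspace ℝ (EuclideanSpace ℝ (Fin n))) : Set (EuclideanSpace ℝ (Fin n)))
          = Set.univ := by
      ext u
      simp only [Set.mem_iUnion, Set.mem_univ, iff_true, SetLike.mem_coe, LinearMap.mem_ker]
      obtain ⟨i, hi⟩ := hcon u
      exact ⟨i, by simpa using hi⟩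
    obtain ⟨i, hi⟩ := Subspace.exists_eq_top_of_iUnion_eq_univ hcover
    have hmem : w i ∈ LinearMap.ker ((innerSL ℝ (w i)).toLinearMap) := by
      rw [hi]; trivial
    have : ⟪w i, w i⟫ = 0 := by simpa using hmem
    exact hwne i (inner_self_eq_zero.mp this)
  obtain ⟨v₀, hv₀⟩ := hexists
  have hv₀ne : v₀ ≠ 0 := by
    intro h
    obtain ⟨i⟩ := hne
    exact hv₀ i (by simp [h])
  set u : EuclideanSpace ℝ (Fin n) := ‖v₀‖⁻¹ • v₀ with hu
  have hunorm : ‖u‖ = 1 := norm_smul_inv_norm hv₀ne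
  have humem : u ∈ Metric.sphere (0 : EuclideanSpace ℝ (Fin n)) 1 :=
    mem_sphere_zero_iff_norm.mpr hunorm
  set F : Metric.sphere (0 : EuclideanSpace ℝ (Fin n)) 1 → ℝ :=
    fun v => ⨅ i : {i : Fin s // i ≠ j}, |(⟪(v : EuclideanSpace ℝ (Fin n)), z j - z i.1⟫ : ℝ)|
    with hF
  have hFu : 0 < F ⟨u, humem⟩ := by
    obtain ⟨i₀, hi₀⟩ := Finite.exists_min
      (fun i : {i : Fin s // i ≠ j} => |(⟪u, z j - z i.1⟫ : ℝ)|)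
    have hpos : 0 < |(⟪u, z j - z i₀.1⟫ : ℝ)| := by
      rw [abs_pos, hu, real_inner_smul_left]
      refine mul_ne_zero (inv_ne_zero (norm_ne_zero_iff.mpr hv₀ne)) ?_
      rw [real_inner_comm]
      exact hv₀ i₀
    exact lt_of_lt_of_le hpos (le_ciInf hi₀)
  have hbdd : BddAbove (Set.range F) := by
    refine ⟨2, ?_⟩
    rintro _ ⟨v, rfl⟩
    obtain ⟨i⟩ := hne
    have h1 : F v ≤ |(⟪(v : EuclideanSpace ℝ (Fin n)), z j - z i.1⟫ : ℝ)| :=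
      ciInf_le (Finite.bddBelow_range _) i
    refine h1.trans ((abs_real_inner_le_norm _ _).trans ?_)
    have hv1 : ‖(v : EuclideanSpace ℝ (Fin n))‖ = 1 := mem_sphere_zero_iff_norm.mp v.2
    rw [hv1, one_mul]
    calc ‖z j - z i.1‖ ≤ ‖z j‖ + ‖z i.1‖ := norm_sub_le _ _
      _ ≤ 2 := by have := hball j; have := hball i.1; linarith
  calc (0:ℝ) < F ⟨u, humem⟩ := hFu
    _ ≤ rho z j := le_ciSup hbdd _


open Stmt7Aux

/-- Construction of the multivariate Lagrange polynomial `Q_j(z) = p_j(⟨v,z⟩)`, where `v` is a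
unit vector realizing `|⟨v, z_j − z_i⟩| ≥ ρ(Z,j)` for `i ≠ j` and `p_j` is the univariate
Lagrange basis polynomial at the nodes `t_i = ⟨v, z_i⟩`: it has total degree ≤ s−1, satisfies
`Q_j(z_i) = δ_{ij}`, and its monomial coefficients are bounded by `(2n/ρ(Z,j))^{s-1}`. -/
theorem stmt7 {n s : ℕ} (hs : 2 ≤ s) (z : Fin s → EuclideanSpace ℝ (Fin n))
    (hz : Function.Injective z) (hball : ∀ i, ‖z i‖ ≤ 1) (j : Fin s)
    (v : EuclideanSpace ℝ (Fin n)) (hv : ‖v‖ = 1)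
    (hsep : ∀ i, i ≠ j → rho z j ≤ |(⟪v, z j - z i⟫ : ℝ)|) :
    let Q : MvPolynomial (Fin n) ℝ :=
      Polynomial.aeval (∑ ℓ, MvPolynomial.C (v ℓ) * MvPolynomial.X ℓ)
        (Lagrange.basis Finset.univ (fun i => (⟪v, z i⟫ : ℝ)) j)
    Q.totalDegree ≤ s - 1 ∧
      (∀ i, MvPolynomial.eval (fun ℓ => z i ℓ) Q = if i = j then 1 else 0) ∧
      ∀ α : Fin n →₀ ℕ, |Q.coeff α| ≤ (2 * n / rho z j) ^ (s - 1) := by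
  intro Q
  classical
  have hρ : 0 < rho z j := Stmt7Aux.rho_pos hs z hz hball j
  -- n is positive
  have hn : 0 < n := by
    rcases Nat.eq_zero_or_pos n with h | h
    · subst h
      have hv0 : v = 0 := PiLp.ext fun ℓ => ℓ.elim0
      rw [hv0, norm_zero] at hv
      norm_num at hv
    · exact h
  have hn1 : (1:ℝ) ≤ n := by exact_mod_cast hn
  set t : Fin s → ℝ := fun i => ⟪v, z i⟫ with ht
  set L : MvPolynomial (Fin n) ℝ := ∑ ℓ, MvPolynomial.C (v ℓ) * MvPolynomial.X ℓ with hL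
  -- separation of nodes
  have hsep' : ∀ i, i ≠ j → rho z j ≤ |t j - t i| := by
    intro i hij
    have := hsep i hij
    rwa [inner_sub_right] at this
  have htne : ∀ i, i ≠ j → t j ≠ t i := by
    intro i hij h
    have := hsep' i hij
    rw [h, sub_self, abs_zero] at this
    exact absurd (lt_of_lt_of_le hρ this) (lt_irrefl 0)
  -- Q as a product
  have hQ : Q = ∏ i ∈ Finset.univ.erase j,
      (MvPolynomial.C ((t j - t i)⁻¹) * (L - MvPolynomial.C (t i))) := by
    show Polynomial.aeval L (Lagrange.basis Finset.univ t j) = _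
    rw [Lagrange.basis, map_prod]
    refine Finset.prod_congr rfl fun i _ => ?_
    rw [Lagrange.basisDivisor, map_mul, map_sub, Polynomial.aeval_X, Polynomial.aeval_C,
      Polynomial.aeval_C]
    rfl
  have hcard : (Finset.univ.erase j).card = s - 1 := by
    rw [Finset.card_erase_of_mem (Finset.mem_univ j), Finset.card_univ, Fintype.card_fin]
  refine ⟨?_, ?_, ?_⟩
  · -- total degree
    rw [hQ]
    refine (MvPolynomial.totalDegree_finset_prod _ _).trans ?_
    have hdeg : ∀ i ∈ Finset.univ.erase j,
        (MvPolynomial.C ((t j - t i)⁻¹) * (L - MvPolynomial.C (t i))).totalDegree ≤ 1 := by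
      intro i _
      refine (MvPolynomial.totalDegree_mul _ _).trans ?_
      rw [MvPolynomial.totalDegree_C, zero_add]
      rw [sub_eq_add_neg, ← map_neg]
      refine (MvPolynomial.totalDegree_add _ _).trans ?_
      rw [MvPolynomial.totalDegree_C]
      simp only [max_le_iff, Nat.zero_le, and_true]
      refine (MvPolynomial.totalDegree_finset_sum _ _).trans ?_
      refine Finset.sup_le fun ℓ _ => ?_
      refine (MvPolynomial.totalDegree_mul _ _).trans ?_
      rw [MvPolynomial.totalDegree_C, MvPolynomial.totalDegree_X]
    refine le_trans (Finset.sum_le_sum (g := fun _ => 1) hdeg) ?_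
    rw [Finset.sum_const, smul_eq_mul, mul_one, hcard]
  · -- evaluation
    intro i
    have hevalL : MvPolynomial.eval (fun ℓ => z i ℓ) L = t i := by
      rw [hL, map_sum, ht]
      simp only [map_mul, MvPolynomial.eval_C, MvPolynomial.eval_X]
      rw [PiLp.inner_apply]
      simp [RCLike.inner_apply, conj_trivial]
      exact Finset.sum_congr rfl fun _ _ => mul_comm _ _
    rw [hQ, map_prod]
    by_cases hij : i = j
    · subst hij
      rw [if_pos rfl]
      refine Finset.prod_eq_one fun k hk => ?_
      rw [Finset.mem_erase] at hk
      rw [map_mul, map_sub, MvPolynomial.eval_C, MvPolynomial.eval_C, hevalL]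
      exact inv_mul_cancel₀ (sub_ne_zero_of_ne (htne k hk.1))
    · rw [if_neg hij]
      refine Finset.prod_eq_zero (Finset.mem_erase.mpr ⟨hij, Finset.mem_univ i⟩) ?_
      rw [map_mul, map_sub, MvPolynomial.eval_C, MvPolynomial.eval_C, hevalL, sub_self, mul_zero]
  · -- coefficient bound
    intro α
    have hfac : ∀ i ∈ Finset.univ.erase j,
        nrm (MvPolynomial.C ((t j - t i)⁻¹) * (L - MvPolynomial.C (t i))) ≤ 2 * n / rho z j := by
      intro i hi
      rw [Finset.mem_erase] at hi
      have h1 : nrm (MvPolynomial.C (σ := Fin n) ((t j - t i)⁻¹)) = |t j - t i|⁻¹ := by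
        rw [nrm_C, abs_inv]
      have hc : |t j - t i|⁻¹ ≤ (rho z j)⁻¹ :=
        inv_anti₀ hρ (hsep' i hi.1)
      have hLn : nrm L ≤ n := by
        refine (nrm_sum_le _ _).trans ?_
        have : ∀ ℓ : Fin n, nrm (MvPolynomial.C (v ℓ) * MvPolynomial.X ℓ) ≤ 1 := by
          intro ℓ
          rw [MvPolynomial.X, MvPolynomial.C_mul_monomial, nrm_monomial, mul_one]
          -- |v ℓ| ≤ 1
          have hsq : (v ℓ)^2 ≤ 1 := by
            have hs1 : ∑ m, (v m)^2 = 1 := by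
              have h := real_inner_self_eq_norm_sq v
              rw [hv, one_pow, PiLp.inner_apply] at h
              simp only [RCLike.inner_apply, conj_trivial] at h
              rw [← h]
              exact Finset.sum_congr rfl fun m _ => (sq (v m)).symm ▸ by ring
            calc (v ℓ)^2 ≤ ∑ m, (v m)^2 :=
                  Finset.single_le_sum (f := fun m => (v m)^2) (fun m _ => sq_nonneg _)
                    (Finset.mem_univ ℓ)
              _ = 1 := hs1
          nlinarith [sq_abs (v ℓ), abs_nonneg (v ℓ)]
        calc ∑ ℓ, nrm (MvPolynomial.C (v ℓ) * MvPolynomial.X ℓ) ≤ ∑ _ℓ : Fin n, (1:ℝ) :=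
              Finset.sum_le_sum fun ℓ _ => this ℓ
          _ = n := by simp
      have hti : |t i| ≤ 1 := by
        have := abs_real_inner_le_norm v (z i)
        rw [hv, one_mul] at this
        exact this.trans (hball i)
      have h2 : nrm (L - MvPolynomial.C (t i)) ≤ (n:ℝ) + 1 := by
        rw [sub_eq_add_neg, ← map_neg]
        refine (nrm_add_le _ _).trans ?_
        rw [nrm_C, abs_neg]
        linarith
      refine (nrm_mul_le _ _).trans ?_
      rw [h1]
      have hnn : (0:ℝ) ≤ (n:ℝ) + 1 := by linarith
      calc |t j - t i|⁻¹ * nrm (L - MvPolynomial.C (t i))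
          ≤ (rho z j)⁻¹ * ((n:ℝ) + 1) := by
            refine mul_le_mul hc h2 (nrm_nonneg _) (inv_nonneg.mpr hρ.le)
        _ ≤ (rho z j)⁻¹ * (2 * n) := by
            refine mul_le_mul_of_nonneg_left (by linarith) (inv_nonneg.mpr hρ.le)
        _ = 2 * n / rho z j := by rw [div_eq_mul_inv]; ring
    calc |Q.coeff α| ≤ nrm Q := abs_coeff_le_nrm Q α
      _ ≤ ∏ i ∈ Finset.univ.erase j,
            nrm (MvPolynomial.C ((t j - t i)⁻¹) * (L - MvPolynomial.C (t i))) := by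
          rw [hQ]; exact nrm_prod_le _ _
      _ ≤ ∏ _i ∈ Finset.univ.erase j, (2 * n / rho z j) :=
          Finset.prod_le_prod (fun i _ => nrm_nonneg _) hfac
      _ = (2 * n / rho z j) ^ (s - 1) := by rw [Finset.prod_const, hcard]
end

section
/- Let Z = {z_1,…,z_s} ⊂ ℝ^n be s ≥ 2 distinct points with ‖z_i‖₂ ≤ 1, let N ≥ s−1, and let V_N(Z) ∈ ℝ^{s×ν}, ν = C(N+n, N), be the monomial Vandermonde matrix with rows V_N(z_i) = (z_i^α)_{|α|≤N}. For each j, let W_j = span{V_N(z_i) : i ≠ j} ⊂ ℝ^ν. Then the Euclidean distance from the row V_N(z_j) to W_j satisfies dist(V_N(z_j), W_j) ≥ ρ(Z,j)^{s−1} / ((4n)^{s−1} · s · √ν). -/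
open scoped RealInnerProductSpace BigOperators

/-- The `i`-th row `(z_i^α)_{|α|≤N}` of the monomial Vandermonde matrix, viewed as a vector of
`ℝ^ν`, `ν = C(N+n,N)`, indexed by multi-indices `α` with `|α| ≤ N`. -/
noncomputable def vrow {n s : ℕ} (N : ℕ) (z : Fin s → EuclideanSpace ℝ (Fin n)) (i : Fin s) :
    EuclideanSpace ℝ {α : Fin n → Fin (N + 1) // ∑ ℓ, (α ℓ : ℕ) ≤ N} :=
  WithLp.toLp 2 (fun α => ∏ ℓ, (z i ℓ) ^ (α.1 ℓ : ℕ))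

private lemma dom_mul {σ : Type*} [DecidableEq σ] {p q p' q' : MvPolynomial σ ℝ}
    (hp : ∀ μ, |MvPolynomial.coeff μ p| ≤ MvPolynomial.coeff μ p')
    (hq : ∀ μ, |MvPolynomial.coeff μ q| ≤ MvPolynomial.coeff μ q') (μ : σ →₀ ℕ) :
    |MvPolynomial.coeff μ (p * q)| ≤ MvPolynomial.coeff μ (p' * q') := by
  rw [MvPolynomial.coeff_mul, MvPolynomial.coeff_mul]
  refine (Finset.abs_sum_le_sum_abs _ _).trans (Finset.sum_le_sum fun x _ => ?_)
  rw [abs_mul]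
  exact mul_le_mul (hp _) (hq _) (abs_nonneg _) ((abs_nonneg _).trans (hp _))

private lemma dom_prod {σ : Type*} [DecidableEq σ] {ι : Type*} {f g : ι → MvPolynomial σ ℝ}
    (h : ∀ i μ, |MvPolynomial.coeff μ (f i)| ≤ MvPolynomial.coeff μ (g i)) (S : Finset ι) :
    ∀ μ, |MvPolynomial.coeff μ (∏ i ∈ S, f i)| ≤ MvPolynomial.coeff μ (∏ i ∈ S, g i) := by
  classical
  induction S using Finset.induction_on with
  | empty =>
    intro μ
    rw [Finset.prod_empty, Finset.prod_empty, MvPolynomial.coeff_one]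
    split <;> simp
  | insert _ _ hx ih =>
    rw [Finset.prod_insert hx, Finset.prod_insert hx]
    exact dom_mul (h _) ih

private lemma norm_le_sum_abs {ι : Type*} [Fintype ι] (c : EuclideanSpace ℝ ι) :
    ‖c‖ ≤ ∑ α, |c α| := by
  rw [EuclideanSpace.norm_eq]
  have h1 : ∑ α, ‖c α‖ ^ 2 ≤ (∑ α, |c α|) ^ 2 := by
    rw [sq, Finset.sum_mul]
    refine Finset.sum_le_sum fun α _ => ?_
    rw [Real.norm_eq_abs, sq]
    exact mul_le_mul_of_nonneg_left
      (Finset.single_le_sum (fun i _ => abs_nonneg (c i)) (Finset.mem_univ α)) (abs_nonneg _)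
  calc Real.sqrt (∑ α, ‖c α‖ ^ 2) ≤ Real.sqrt ((∑ α, |c α|) ^ 2) := Real.sqrt_le_sqrt h1
  _ = ∑ α, |c α| := Real.sqrt_sq (Finset.sum_nonneg fun α _ => abs_nonneg _)

private lemma abs_inner_le_infDist_mul {E : Type*} [NormedAddCommGroup E]
    [InnerProductSpace ℝ E] (W : Submodule ℝ E) (x c : E)
    (h : ∀ y ∈ W, (⟪y, c⟫ : ℝ) = 0) :
    |(⟪x, c⟫ : ℝ)| ≤ Metric.infDist x (W : Set E) * ‖c‖ := by
  rcases eq_or_ne c 0 with rfl | hc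
  · simp [inner_zero_right]
  have hcpos : 0 < ‖c‖ := norm_pos_iff.mpr hc
  have hx : ∀ y ∈ W, |(⟪x, c⟫ : ℝ)| ≤ dist x y * ‖c‖ := by
    intro y hy
    have h1 : (⟪x, c⟫ : ℝ) = ⟪x - y, c⟫ := by rw [inner_sub_left, h y hy, sub_zero]
    rw [h1, dist_eq_norm]
    exact abs_real_inner_le_norm _ _
  have hdiv : |(⟪x, c⟫ : ℝ)| / ‖c‖ ≤ Metric.infDist x (W : Set E) := by
    by_contra hlt
    push_neg at hlt
    obtain ⟨y, hy, hdy⟩ := (Metric.infDist_lt_iff ⟨0, W.zero_mem⟩).1 hlt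
    have := (hx y hy).trans_lt (by
      have := (lt_div_iff₀ hcpos).1 hdy
      linarith)
    exact lt_irrefl _ this
  calc |(⟪x, c⟫ : ℝ)| = |(⟪x, c⟫ : ℝ)| / ‖c‖ * ‖c‖ := by field_simp
  _ ≤ Metric.infDist x (W : Set E) * ‖c‖ := mul_le_mul_of_nonneg_right hdiv hcpos.le

private lemma key_vec {n s N : ℕ} (hs : 2 ≤ s) (hN : s - 1 ≤ N) (j : Fin s)
    (z : Fin s → EuclideanSpace ℝ (Fin n)) (v : EuclideanSpace ℝ (Fin n)) :
    ∃ c : EuclideanSpace ℝ {α : Fin n → Fin (N + 1) // ∑ ℓ, (α ℓ : ℕ) ≤ N},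
      (∀ i : Fin s, (⟪vrow N z i, c⟫ : ℝ) =
        ∏ i' ∈ Finset.univ.erase j, ((⟪v, z i⟫ : ℝ) - ⟪v, z i'⟫)) ∧
      ‖c‖ ≤ ∏ i' ∈ Finset.univ.erase j, ((∑ ℓ, |v ℓ|) + |(⟪v, z i'⟫ : ℝ)|) := by
  classical
  set I := {α : Fin n → Fin (N + 1) // ∑ ℓ, (α ℓ : ℕ) ≤ N}
  set L : MvPolynomial (Fin n) ℝ := ∑ ℓ, MvPolynomial.C (v ℓ) * MvPolynomial.X ℓ with hL
  set Labs : MvPolynomial (Fin n) ℝ := ∑ ℓ, MvPolynomial.C |v ℓ| * MvPolynomial.X ℓ with hLabs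
  set P : MvPolynomial (Fin n) ℝ :=
    ∏ i' ∈ Finset.univ.erase j, (L - MvPolynomial.C (⟪v, z i'⟫ : ℝ)) with hP
  set Q : MvPolynomial (Fin n) ℝ :=
    ∏ i' ∈ Finset.univ.erase j, (Labs + MvPolynomial.C |(⟪v, z i'⟫ : ℝ)|) with hQ
  have hinner : ∀ w w' : EuclideanSpace ℝ (Fin n), (⟪w, w'⟫ : ℝ) = ∑ ℓ, w ℓ * w' ℓ := by
    intro w w'
    simp [PiLp.inner_apply, RCLike.inner_apply, conj_trivial, mul_comm]
  have hevalL : ∀ w : EuclideanSpace ℝ (Fin n),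
      MvPolynomial.eval (fun ℓ => w ℓ) L = ⟪v, w⟫ := by
    intro w
    rw [hL, map_sum, hinner]
    simp
  have hcard : (Finset.univ.erase j).card = s - 1 := by
    rw [Finset.card_erase_of_mem (Finset.mem_univ j), Finset.card_univ, Fintype.card_fin]
  -- total degree bound
  have hdegL : L.totalDegree ≤ 1 := by
    refine (MvPolynomial.totalDegree_finset_sum _ _).trans (Finset.sup_le fun ℓ _ => ?_)
    refine (MvPolynomial.totalDegree_mul _ _).trans ?_
    simp [MvPolynomial.totalDegree_C, MvPolynomial.totalDegree_X]
  have hdegP : P.totalDegree ≤ N := by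
    refine (MvPolynomial.totalDegree_finset_prod _ _).trans ?_
    have h1 : ∀ i' ∈ Finset.univ.erase j,
        (L - MvPolynomial.C (⟪v, z i'⟫ : ℝ)).totalDegree ≤ 1 := by
      intro i' _
      rw [sub_eq_add_neg]
      refine (MvPolynomial.totalDegree_add _ _).trans ?_
      simp only [MvPolynomial.totalDegree_neg, MvPolynomial.totalDegree_C]
      exact max_le hdegL (Nat.zero_le _)
    refine le_trans (Finset.sum_le_sum (g := fun _ => 1) h1) ?_
    rw [Finset.sum_const, smul_eq_mul, mul_one, hcard]
    exact hN
  -- embedding of index type into finsupps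
  set e : I → (Fin n →₀ ℕ) :=
    fun α => Finsupp.equivFunOnFinite.symm (fun ℓ => (α.1 ℓ : ℕ)) with he
  have he_apply : ∀ (α : I) (ℓ : Fin n), e α ℓ = (α.1 ℓ : ℕ) := by
    intro α ℓ; simp [he, Finsupp.equivFunOnFinite]
  have he_inj : Function.Injective e := by
    intro α β h
    refine Subtype.ext (funext fun ℓ => Fin.ext ?_)
    rw [← he_apply α ℓ, ← he_apply β ℓ, h]
  have hsupp : P.support ⊆ Finset.univ.image e := by
    intro d hd
    have h1 : ∑ ℓ, d ℓ ≤ N := by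
      have h2 := (MvPolynomial.le_totalDegree hd).trans hdegP
      rwa [Finsupp.sum_fintype _ _ (fun _ => rfl)] at h2
    have hlt : ∀ ℓ, d ℓ < N + 1 := fun ℓ =>
      Nat.lt_succ_of_le ((Finset.single_le_sum (fun i _ => Nat.zero_le (d i))
        (Finset.mem_univ ℓ)).trans h1)
    refine Finset.mem_image.2 ⟨⟨fun ℓ => ⟨d ℓ, hlt ℓ⟩, by simpa using h1⟩, Finset.mem_univ _, ?_⟩
    ext ℓ
    rw [he_apply]
  set c : EuclideanSpace ℝ I := WithLp.toLp 2 (fun α => MvPolynomial.coeff (e α) P) with hc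
  have heval : ∀ w : EuclideanSpace ℝ (Fin n),
      MvPolynomial.eval (fun ℓ => w ℓ) P = ∑ α : I, c α * ∏ ℓ, (w ℓ) ^ (α.1 ℓ : ℕ) := by
    intro w
    rw [MvPolynomial.eval_eq' (fun ℓ => w ℓ) P,
      Finset.sum_subset hsupp (fun d _ hd => by
        rw [MvPolynomial.notMem_support_iff.1 hd, zero_mul]),
      Finset.sum_image (fun α _ β _ h => he_inj h)]
    refine Finset.sum_congr rfl fun α _ => ?_
    rw [hc]
    refine congrArg _ (Finset.prod_congr rfl fun ℓ _ => ?_)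
    rw [he_apply]
  refine ⟨c, ?_, ?_⟩
  · intro i
    have h1 : (⟪vrow N z i, c⟫ : ℝ) = MvPolynomial.eval (fun ℓ => z i ℓ) P := by
      have h2 : (⟪vrow N z i, c⟫ : ℝ) = ∑ α : I, vrow N z i α * c α := by
        simp [PiLp.inner_apply, RCLike.inner_apply, conj_trivial]
        exact Finset.sum_congr rfl fun _ _ => mul_comm _ _
      rw [h2, heval]
      refine Finset.sum_congr rfl fun α _ => ?_
      rw [mul_comm]
      rfl
    rw [h1, hP, map_prod]
    refine Finset.prod_congr rfl fun i' _ => ?_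
    rw [map_sub, MvPolynomial.eval_C, hevalL]
  · -- norm bound via coefficient domination
    have hdomf : ∀ i' : Fin s, ∀ μ, |MvPolynomial.coeff μ (L - MvPolynomial.C (⟪v, z i'⟫ : ℝ))|
        ≤ MvPolynomial.coeff μ (Labs + MvPolynomial.C |(⟪v, z i'⟫ : ℝ)|) := by
      intro i' μ
      rw [MvPolynomial.coeff_sub, MvPolynomial.coeff_add, hL, hLabs,
        MvPolynomial.coeff_sum, MvPolynomial.coeff_sum]
      simp only [MvPolynomial.coeff_C_mul, MvPolynomial.coeff_X', MvPolynomial.coeff_C]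
      refine (abs_sub _ _).trans (add_le_add ?_ ?_)
      · refine (Finset.abs_sum_le_sum_abs _ _).trans (le_of_eq (Finset.sum_congr rfl
          fun ℓ _ => ?_))
        rw [abs_mul]
        congr 1
        split <;> simp
      · split <;> simp
    have hQfac_nonneg : ∀ i' : Fin s, ∀ μ, |MvPolynomial.coeff μ
        (Labs + MvPolynomial.C |(⟪v, z i'⟫ : ℝ)|)| ≤ MvPolynomial.coeff μ
        (Labs + MvPolynomial.C |(⟪v, z i'⟫ : ℝ)|) := by
      intro i' μ
      rw [abs_le]
      refine ⟨?_, le_refl _⟩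
      have h0 : 0 ≤ MvPolynomial.coeff μ (Labs + MvPolynomial.C |(⟪v, z i'⟫ : ℝ)|) := by
        rw [MvPolynomial.coeff_add, hLabs, MvPolynomial.coeff_sum]
        simp only [MvPolynomial.coeff_C_mul, MvPolynomial.coeff_X', MvPolynomial.coeff_C]
        refine add_nonneg (Finset.sum_nonneg fun ℓ _ => ?_) ?_
        · split <;> simp [abs_nonneg]
        · split <;> simp [abs_nonneg]
      linarith
    have hPQ : ∀ μ, |MvPolynomial.coeff μ P| ≤ MvPolynomial.coeff μ Q :=
      dom_prod (fun i' => hdomf i') _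
    have hQ0 : ∀ μ, 0 ≤ MvPolynomial.coeff μ Q := fun μ =>
      (abs_nonneg _).trans (dom_prod (fun i' => hQfac_nonneg i') _ μ)
    have hevalQ : MvPolynomial.eval (fun _ => (1 : ℝ)) Q =
        ∏ i' ∈ Finset.univ.erase j, ((∑ ℓ, |v ℓ|) + |(⟪v, z i'⟫ : ℝ)|) := by
      rw [hQ, map_prod]
      refine Finset.prod_congr rfl fun i' _ => ?_
      rw [map_add, MvPolynomial.eval_C, hLabs, map_sum]
      simp
    calc ‖c‖ ≤ ∑ α, |c α| := norm_le_sum_abs c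
      _ = ∑ d ∈ Finset.univ.image e, |MvPolynomial.coeff d P| := by
        rw [Finset.sum_image (fun α _ β _ h => he_inj h)]
      _ ≤ ∑ d ∈ Finset.univ.image e, MvPolynomial.coeff d Q :=
        Finset.sum_le_sum fun d _ => hPQ d
      _ ≤ ∑ d ∈ Finset.univ.image e ∪ Q.support, MvPolynomial.coeff d Q :=
        Finset.sum_le_sum_of_subset_of_nonneg Finset.subset_union_left
          (fun d _ _ => hQ0 d)
      _ = ∑ d ∈ Q.support, MvPolynomial.coeff d Q := by
        refine (Finset.sum_subset Finset.subset_union_right (fun d _ hd => ?_)).symm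
        exact MvPolynomial.notMem_support_iff.1 hd
      _ = MvPolynomial.eval (fun _ => (1 : ℝ)) Q := by
        rw [MvPolynomial.eval_eq' (fun _ => (1 : ℝ)) Q]
        simp
      _ = _ := hevalQ

/-- Row-to-span separation: the Euclidean distance from the row `V_N(z_j)` to the span `W_j` of
the other rows is at least `ρ(Z,j)^{s-1} / ((4n)^{s-1} s √ν)`. -/
theorem stmt8 {n s N : ℕ} (hs : 2 ≤ s) (z : Fin s → EuclideanSpace ℝ (Fin n))
    (hz : Function.Injective z) (hball : ∀ i, ‖z i‖ ≤ 1) (hN : s - 1 ≤ N) (j : Fin s) :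
    rho z j ^ (s - 1) / ((4 * n : ℝ) ^ (s - 1) * s * Real.sqrt ((N + n).choose N)) ≤
      Metric.infDist (vrow N z j)
        (Submodule.span ℝ {x | ∃ i, i ≠ j ∧ x = vrow N z i} : Set _) := by
  classical
  have hs1 : s - 1 ≠ 0 := by omega
  have hdist0 : (0:ℝ) ≤ Metric.infDist (vrow N z j)
      (Submodule.span ℝ {x | ∃ i, i ≠ j ∧ x = vrow N z i} : Set _) := Metric.infDist_nonneg
  rcases Nat.eq_zero_or_pos n with hn | hn
  · subst hn
    have hempty : IsEmpty (Metric.sphere (0 : EuclideanSpace ℝ (Fin 0)) 1) := by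
      refine ⟨fun u => ?_⟩
      have hu : ‖(u : EuclideanSpace ℝ (Fin 0))‖ = 1 := mem_sphere_zero_iff_norm.mp u.2
      rw [EuclideanSpace.norm_eq] at hu
      simp at hu
    have hrho : rho z j = 0 := by
      simp only [rho]
      exact Real.iSup_of_isEmpty _
    rw [hrho, zero_pow hs1, zero_div]
    exact hdist0
  -- main case `n ≥ 1`
  have hnem : Nonempty {i : Fin s // i ≠ j} := by
    obtain ⟨i, hi⟩ := Fintype.exists_ne_of_one_lt_card (by rw [Fintype.card_fin]; omega) j
    exact ⟨⟨i, hi⟩⟩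
  have hv0 : (EuclideanSpace.single (⟨0, hn⟩ : Fin n) (1:ℝ)) ∈
      Metric.sphere (0 : EuclideanSpace ℝ (Fin n)) 1 := by
    rw [mem_sphere_zero_iff_norm, EuclideanSpace.norm_single]
    norm_num
  have hsph : Nonempty (Metric.sphere (0 : EuclideanSpace ℝ (Fin n)) 1) := ⟨⟨_, hv0⟩⟩
  set F : EuclideanSpace ℝ (Fin n) → ℝ :=
    fun w => ⨅ i : {i : Fin s // i ≠ j}, |(⟪w, z j - z i.1⟫ : ℝ)| with hF
  have hFinf : F = fun w => Finset.univ.inf' Finset.univ_nonempty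
      (fun i : {i : Fin s // i ≠ j} => |(⟪w, z j - z i.1⟫ : ℝ)|) :=
    funext fun w => (Finset.inf'_univ_eq_ciInf _).symm
  have hFcont : Continuous F := by
    rw [hFinf]
    exact Continuous.finset_inf'_apply Finset.univ_nonempty fun i _ =>
      (continuous_id.inner continuous_const).abs
  obtain ⟨v, hv_mem, hv_max⟩ := (isCompact_sphere (0 : EuclideanSpace ℝ (Fin n)) 1).exists_isMaxOn
    ⟨_, hv0⟩ hFcont.continuousOn
  have hvnorm : ‖v‖ = 1 := mem_sphere_zero_iff_norm.mp hv_mem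
  have hrho_le : rho z j ≤ F v := by
    simp only [rho]
    exact ciSup_le fun u => hv_max u.2
  have hF0 : ∀ w, 0 ≤ F w := fun w => le_ciInf fun i => abs_nonneg _
  have hrho0 : 0 ≤ rho z j := by
    have hbdd : BddAbove (Set.range fun u : Metric.sphere (0 : EuclideanSpace ℝ (Fin n)) 1 =>
        F u.1) := ⟨F v, by rintro x ⟨u, rfl⟩; exact hv_max u.2⟩
    have h2 := le_ciSup hbdd (⟨_, hv0⟩ : Metric.sphere (0 : EuclideanSpace ℝ (Fin n)) 1)
    simp only [rho]
    exact le_trans (hF0 _) h2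
  set m := F v with hm
  have hm_le : ∀ i : Fin s, i ≠ j → m ≤ |(⟪v, z j⟫ : ℝ) - ⟪v, z i⟫| := by
    intro i hi
    have h1 : m ≤ |(⟪v, z j - z i⟫ : ℝ)| :=
      ciInf_le (f := fun i : {i : Fin s // i ≠ j} => |(⟪v, z j - z i.1⟫ : ℝ)|) ⟨0, by rintro x ⟨k, rfl⟩; exact abs_nonneg _⟩ ⟨i, hi⟩
    rwa [inner_sub_right] at h1
  obtain ⟨c, hceval, hcnorm⟩ := key_vec hs hN j z v
  have hcard : (Finset.univ.erase j).card = s - 1 := by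
    rw [Finset.card_erase_of_mem (Finset.mem_univ j), Finset.card_univ, Fintype.card_fin]
  have htle : ∀ i : Fin s, |(⟪v, z i⟫ : ℝ)| ≤ 1 := by
    intro i
    calc |(⟪v, z i⟫:ℝ)| ≤ ‖v‖ * ‖z i‖ := abs_real_inner_le_norm _ _
    _ ≤ 1 := by rw [hvnorm, one_mul]; exact hball i
  have hvcoord : ∀ ℓ, |v ℓ| ≤ 1 := by
    intro ℓ
    have h1 : |v ℓ| ≤ ‖v‖ := by
      rw [EuclideanSpace.norm_eq, ← Real.sqrt_sq_eq_abs]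
      apply Real.sqrt_le_sqrt
      have h2 := Finset.single_le_sum (f := fun ℓ' => ‖v ℓ'‖^2)
        (fun i _ => sq_nonneg _) (Finset.mem_univ ℓ)
      simpa [Real.norm_eq_abs, sq_abs] using h2
    rw [hvnorm] at h1; exact h1
  have hn1 : (1:ℝ) ≤ n := by exact_mod_cast hn
  have hprod_le : ∏ i' ∈ Finset.univ.erase j, ((∑ ℓ, |v ℓ|) + |(⟪v, z i'⟫ : ℝ)|) ≤
      (n + 1 : ℝ) ^ (s - 1) := by
    calc ∏ i' ∈ Finset.univ.erase j, ((∑ ℓ, |v ℓ|) + |(⟪v, z i'⟫ : ℝ)|)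
        ≤ ∏ _i' ∈ Finset.univ.erase j, (n + 1 : ℝ) := by
          refine Finset.prod_le_prod (fun i _ => add_nonneg
            (Finset.sum_nonneg fun ℓ _ => abs_nonneg _) (abs_nonneg _)) (fun i _ => ?_)
          have h2 : (∑ ℓ, |v ℓ|) ≤ (n:ℝ) := by
            calc (∑ ℓ, |v ℓ|) ≤ ∑ _ℓ : Fin n, (1:ℝ) := Finset.sum_le_sum fun ℓ _ => hvcoord ℓ
            _ = n := by simp
          linarith [htle i]
      _ = (n+1:ℝ) ^ (s-1) := by rw [Finset.prod_const, hcard]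
  have horth : ∀ y ∈ Submodule.span ℝ {x | ∃ i, i ≠ j ∧ x = vrow N z i},
      (⟪y, c⟫:ℝ) = 0 := by
    intro y hy
    induction hy using Submodule.span_induction with
    | mem x hx =>
      obtain ⟨i, hij, rfl⟩ := hx
      rw [hceval i]
      exact Finset.prod_eq_zero (Finset.mem_erase.2 ⟨hij, Finset.mem_univ i⟩) (sub_self _)
    | zero => exact inner_zero_left c
    | add x y hx hy h1 h2 => rw [inner_add_left, h1, h2, add_zero]
    | smul a x hx h1 => rw [real_inner_smul_left, h1, mul_zero]
  have hkey := abs_inner_le_infDist_mul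
    (Submodule.span ℝ {x | ∃ i, i ≠ j ∧ x = vrow N z i}) (vrow N z j) c horth
  have hlow : m ^ (s - 1) ≤ |(⟪vrow N z j, c⟫ : ℝ)| := by
    rw [hceval j, Finset.abs_prod]
    calc m ^ (s-1) = ∏ _i' ∈ Finset.univ.erase j, m := by rw [Finset.prod_const, hcard]
    _ ≤ ∏ i' ∈ Finset.univ.erase j, |(⟪v, z j⟫:ℝ) - ⟪v, z i'⟫| :=
      Finset.prod_le_prod (fun _ _ => hF0 v) (fun i hi => hm_le i (Finset.mem_erase.1 hi).1)
  have hν1 : (1:ℝ) ≤ Real.sqrt ((N + n).choose N) := by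
    rw [show (1:ℝ) = Real.sqrt 1 by rw [Real.sqrt_one]]
    apply Real.sqrt_le_sqrt
    exact_mod_cast Nat.one_le_iff_ne_zero.2 (Nat.choose_pos (Nat.le_add_right N n)).ne'
  have hspos : (1:ℝ) ≤ s := by exact_mod_cast (by omega : 1 ≤ s)
  have h4n : (0:ℝ) < 4 * n := by linarith
  have hD : (0:ℝ) < (4 * n : ℝ) ^ (s - 1) * s * Real.sqrt ((N + n).choose N) :=
    mul_pos (mul_pos (pow_pos h4n _) (by linarith)) (by linarith)
  have hcD : ‖c‖ ≤ (4 * n : ℝ) ^ (s - 1) * s * Real.sqrt ((N + n).choose N) := by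
    refine (hcnorm.trans hprod_le).trans ?_
    have h1 : (n + 1 : ℝ) ^ (s-1) ≤ (4 * n : ℝ) ^ (s-1) :=
      pow_le_pow_left₀ (by linarith) (by linarith) _
    calc (n+1:ℝ)^(s-1) ≤ (4*n:ℝ)^(s-1) := h1
    _ = (4*n:ℝ)^(s-1) * 1 * 1 := by ring
    _ ≤ _ := by
      refine mul_le_mul (mul_le_mul le_rfl hspos zero_le_one (by positivity)) hν1
        zero_le_one (by positivity)
  rw [div_le_iff₀ hD]
  calc rho z j ^ (s-1) ≤ m ^ (s-1) := pow_le_pow_left₀ hrho0 hrho_le _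
  _ ≤ |(⟪vrow N z j, c⟫:ℝ)| := hlow
  _ ≤ Metric.infDist (vrow N z j)
      (Submodule.span ℝ {x | ∃ i, i ≠ j ∧ x = vrow N z i} : Set _) * ‖c‖ := hkey
  _ ≤ Metric.infDist (vrow N z j)
      (Submodule.span ℝ {x | ∃ i, i ≠ j ∧ x = vrow N z i} : Set _) *
      ((4*n:ℝ)^(s-1) * s * Real.sqrt ((N+n).choose N)) :=
    mul_le_mul_of_nonneg_left hcD hdist0
end

section
/- Let Z = {z_1,…,z_s} ⊂ ℝ^n be s ≥ 2 distinct points with ‖z_i‖₂ ≤ 1, let N ≥ s−1, and let V_N(Z) ∈ ℝ^{s×ν} be the monomial Vandermonde matrix. For each j, let θ_j be the angle between the row V_N(z_j) and the subspace W_j = span{V_N(z_i) : i ≠ j}, i.e. sin θ_j = dist(V_N(z_j), W_j)/‖V_N(z_j)‖₂. Then sin θ_j ≥ ρ(Z,j)^{s−1} / ((4n)^{s−1} · s · ν). -/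
open scoped RealInnerProductSpace BigOperators

section Aux

open MvPolynomial Finset

/-- ℓ¹ norm of the coefficients of a multivariate polynomial. -/
noncomputable def S10 {n : ℕ} (p : MvPolynomial (Fin n) ℝ) : ℝ :=
  ∑ d ∈ p.support, |MvPolynomial.coeff d p|

lemma S10_nonneg {n : ℕ} (p : MvPolynomial (Fin n) ℝ) : 0 ≤ S10 p :=
  Finset.sum_nonneg fun _ _ => abs_nonneg _

lemma abs_coeff_le_S10 {n : ℕ} (p : MvPolynomial (Fin n) ℝ) (d : Fin n →₀ ℕ) :
    |coeff d p| ≤ S10 p := by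
  by_cases h : d ∈ p.support
  · exact Finset.single_le_sum (f := fun d => |coeff d p|) (fun _ _ => abs_nonneg _) h
  · simp only [MvPolynomial.notMem_support_iff] at h
    simp [h, S10_nonneg]

lemma S10_monomial_le {n : ℕ} (d : Fin n →₀ ℕ) (a : ℝ) : S10 (monomial d a) ≤ |a| := by
  by_cases h : a = 0
  · simp [S10, h]
  · rw [S10, MvPolynomial.support_monomial, if_neg h]
    simp

lemma S10_one {n : ℕ} : S10 (1 : MvPolynomial (Fin n) ℝ) ≤ 1 := by
  simpa using S10_monomial_le (0 : Fin n →₀ ℕ) (1 : ℝ)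

lemma S10_C_le {n : ℕ} (a : ℝ) : S10 (C a : MvPolynomial (Fin n) ℝ) ≤ |a| := by
  rw [MvPolynomial.C_apply]; exact S10_monomial_le _ _

lemma S10_add {n : ℕ} (p q : MvPolynomial (Fin n) ℝ) : S10 (p + q) ≤ S10 p + S10 q := by
  calc S10 (p + q) ≤ ∑ d ∈ p.support ∪ q.support, |coeff d (p + q)| := by
        apply Finset.sum_le_sum_of_subset_of_nonneg (MvPolynomial.support_add)
        intros; exact abs_nonneg _
    _ ≤ ∑ d ∈ p.support ∪ q.support, (|coeff d p| + |coeff d q|) := by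
        apply Finset.sum_le_sum; intro d _
        rw [MvPolynomial.coeff_add]; exact abs_add_le _ _
    _ = (∑ d ∈ p.support ∪ q.support, |coeff d p|)
        + ∑ d ∈ p.support ∪ q.support, |coeff d q| := Finset.sum_add_distrib
    _ ≤ S10 p + S10 q := by
        apply add_le_add
        · rw [S10]; apply le_of_eq
          refine (Finset.sum_subset Finset.subset_union_left ?_).symm
          intro d _ hd; simp only [MvPolynomial.notMem_support_iff] at hd; simp [hd]
        · rw [S10]; apply le_of_eq
          refine (Finset.sum_subset Finset.subset_union_right ?_).symm
          intro d _ hd; simp only [MvPolynomial.notMem_support_iff] at hd; simp [hd]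

lemma S10_sum_le {n : ℕ} {ι : Type*} (t : Finset ι) (f : ι → MvPolynomial (Fin n) ℝ) :
    S10 (∑ i ∈ t, f i) ≤ ∑ i ∈ t, S10 (f i) := by
  classical
  induction t using Finset.induction with
  | empty => simp [S10]
  | insert _ _ h ih =>
    rw [Finset.sum_insert h, Finset.sum_insert h]
    exact le_trans (S10_add _ _) (by linarith)

lemma S10_neg {n : ℕ} (p : MvPolynomial (Fin n) ℝ) : S10 (-p) = S10 p := by
  rw [S10, S10, MvPolynomial.support_neg]
  apply Finset.sum_congr rfl
  intro d _; rw [MvPolynomial.coeff_neg, abs_neg]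

lemma S10_sub {n : ℕ} (p q : MvPolynomial (Fin n) ℝ) : S10 (p - q) ≤ S10 p + S10 q := by
  rw [sub_eq_add_neg]
  exact le_trans (S10_add _ _) (by rw [S10_neg])

lemma S10_mul {n : ℕ} (p q : MvPolynomial (Fin n) ℝ) : S10 (p * q) ≤ S10 p * S10 q := by
  classical
  have key : ∀ d, coeff d (p * q)
      = ∑ x ∈ (p.support ×ˢ q.support).filter (fun x => x.1 + x.2 = d),
          coeff x.1 p * coeff x.2 q := by
    intro d
    rw [MvPolynomial.coeff_mul]
    refine (Finset.sum_subset ?_ ?_).symm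
    · intro x hx
      simp only [Finset.mem_filter] at hx
      rw [Finset.HasAntidiagonal.mem_antidiagonal]; exact hx.2
    · intro x hx hx'
      simp only [Finset.mem_filter, Finset.mem_product, not_and, Finset.HasAntidiagonal.mem_antidiagonal] at hx hx'
      by_cases h1 : x.1 ∈ p.support
      · by_cases h2 : x.2 ∈ q.support
        · exact absurd hx (by intro hc; exact hx' ⟨h1, h2⟩ hc)
        · simp only [MvPolynomial.notMem_support_iff] at h2; simp [h2]
      · simp only [MvPolynomial.notMem_support_iff] at h1; simp [h1]
  calc S10 (p * q) ≤ ∑ d ∈ (p*q).support,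
        ∑ x ∈ (p.support ×ˢ q.support).filter (fun x => x.1 + x.2 = d),
          |coeff x.1 p * coeff x.2 q| := by
        apply Finset.sum_le_sum; intro d _
        rw [key d]; exact Finset.abs_sum_le_sum_abs _ _
    _ ≤ ∑ d ∈ ((p*q).support ∪ Finset.image (fun x => x.1 + x.2) (p.support ×ˢ q.support)),
        ∑ x ∈ (p.support ×ˢ q.support).filter (fun x => x.1 + x.2 = d),
          |coeff x.1 p * coeff x.2 q| := by
        apply Finset.sum_le_sum_of_subset_of_nonneg Finset.subset_union_left
        intros; exact Finset.sum_nonneg fun _ _ => abs_nonneg _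
    _ = ∑ x ∈ p.support ×ˢ q.support, |coeff x.1 p * coeff x.2 q| := by
        rw [Finset.sum_fiberwise_of_maps_to]
        intro x hx
        exact Finset.mem_union_right _ (Finset.mem_image_of_mem _ hx)
    _ = S10 p * S10 q := by
        rw [S10, S10, Finset.sum_mul_sum]
        rw [Finset.sum_product]
        simp [abs_mul]

lemma S10_prod_le {n : ℕ} {ι : Type*} (t : Finset ι) (f : ι → MvPolynomial (Fin n) ℝ)
    (B : ι → ℝ) (hB : ∀ i ∈ t, S10 (f i) ≤ B i) (hB0 : ∀ i ∈ t, 0 ≤ B i) :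
    S10 (∏ i ∈ t, f i) ≤ ∏ i ∈ t, B i := by
  classical
  induction t using Finset.induction with
  | empty => simpa using S10_one
  | @insert a t h ih =>
    rw [Finset.prod_insert h, Finset.prod_insert h]
    calc S10 (f a * ∏ i ∈ t, f i) ≤ S10 (f a) * S10 (∏ i ∈ t, f i) := S10_mul _ _
      _ ≤ B a * ∏ i ∈ t, B i := by
          apply mul_le_mul (hB a (Finset.mem_insert_self a t))
            (ih (fun i hi => hB i (Finset.mem_insert_of_mem hi))
                (fun i hi => hB0 i (Finset.mem_insert_of_mem hi)))
            (S10_nonneg _) (hB0 a (Finset.mem_insert_self a t))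

lemma card_index_le {n N : ℕ} :
    Fintype.card {α : Fin n → Fin (N + 1) // ∑ ℓ, (α ℓ : ℕ) ≤ N} ≤ (N + n).choose N := by
  classical
  set g : {α : Fin n → Fin (N + 1) // ∑ ℓ, (α ℓ : ℕ) ≤ N} → Fin (n+1) → ℕ :=
    fun α k => if h : (k : ℕ) < n then (α.1 ⟨k, h⟩ : ℕ) else N - ∑ ℓ, (α.1 ℓ : ℕ) with hg
  have hcount : ∀ α k, Multiset.count k (∑ k' : Fin (n+1), g α k' • ({k'} : Multiset (Fin (n+1))))
      = g α k := by
    intro α k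
    rw [Multiset.count_sum']
    simp only [Multiset.count_nsmul, Multiset.count_singleton]
    rw [Finset.sum_eq_single k]
    · simp
    · intro b _ hb; simp [(Ne.symm hb : ¬ k = b)]
    · intro h; exact absurd (Finset.mem_univ k) h
  have hcard : ∀ α, (Multiset.card (∑ k : Fin (n+1), g α k • ({k} : Multiset (Fin (n+1))))) = N := by
    intro α
    rw [Multiset.card_sum]
    simp only [Multiset.card_nsmul, Multiset.card_singleton, mul_one]
    rw [Fin.sum_univ_castSucc]
    have h1 : ∀ ℓ : Fin n, g α (Fin.castSucc ℓ) = (α.1 ℓ : ℕ) := by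
      intro ℓ; simp [hg, Fin.is_lt ℓ]
    have h2 : g α (Fin.last n) = N - ∑ ℓ, (α.1 ℓ : ℕ) := by
      simp [hg]
    rw [h2, Finset.sum_congr rfl (fun ℓ _ => h1 ℓ)]
    have := α.2
    omega
  set ψ : {α : Fin n → Fin (N + 1) // ∑ ℓ, (α ℓ : ℕ) ≤ N} → Sym (Fin (n+1)) N :=
    fun α => ⟨∑ k : Fin (n+1), g α k • ({k} : Multiset (Fin (n+1))), hcard α⟩ with hψ
  have hinj : Function.Injective ψ := by
    intro α β hαβ
    have hcounts : ∀ k, g α k = g β k := by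
      intro k
      rw [← hcount α k, ← hcount β k]
      have : (ψ α).1 = (ψ β).1 := by rw [hαβ]
      simp only [hψ] at this
      rw [this]
    ext ℓ
    have := hcounts (Fin.castSucc ℓ)
    simpa [hg, Fin.is_lt ℓ] using this
  calc Fintype.card {α : Fin n → Fin (N + 1) // ∑ ℓ, (α ℓ : ℕ) ≤ N}
      ≤ Fintype.card (Sym (Fin (n+1)) N) := Fintype.card_le_of_injective ψ hinj
    _ = (N + n).choose N := by
        rw [Sym.card_sym_eq_multichoose, Fintype.card_fin, Nat.multichoose_eq]
        congr 1
        omega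

lemma coord_abs_le_norm {n : ℕ} (x : EuclideanSpace ℝ (Fin n)) (ℓ : Fin n) : |x ℓ| ≤ ‖x‖ := by
  rw [EuclideanSpace.norm_eq]
  rw [← Real.sqrt_sq_eq_abs]
  apply Real.sqrt_le_sqrt
  have : x ℓ ^ 2 = ‖x ℓ‖ ^ 2 := by rw [Real.norm_eq_abs, sq_abs]
  rw [this]
  exact Finset.single_le_sum (f := fun i => ‖x i‖ ^ 2) (fun _ _ => sq_nonneg _)
    (Finset.mem_univ ℓ)

end Aux

section Main

open MvPolynomial Finset

set_option maxHeartbeats 1000000 in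
/-- Key pointwise estimate: for each unit vector `v`, the min-separation in direction `v`,
raised to the power `s-1`, is at most `RHS * D`. -/
lemma key_estimate {n s N : ℕ} (hs : 2 ≤ s) (hn : 1 ≤ n) (z : Fin s → EuclideanSpace ℝ (Fin n))
    (hball : ∀ i, ‖z i‖ ≤ 1) (hN : s - 1 ≤ N) (j : Fin s)
    (v : EuclideanSpace ℝ (Fin n)) (hv : ‖v‖ = 1) :
    (⨅ i : {i : Fin s // i ≠ j}, |(⟪v, z j - z i.1⟫ : ℝ)|) ^ (s - 1) ≤
      (Metric.infDist (vrow N z j)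
          (Submodule.span ℝ {x | ∃ i, i ≠ j ∧ x = vrow N z i} : Set _) / ‖vrow N z j‖) *
        ((4 * n : ℝ) ^ (s - 1) * s * ((N + n).choose N : ℝ)) := by
  classical
  set W : Submodule ℝ (EuclideanSpace ℝ {α : Fin n → Fin (N + 1) // ∑ ℓ, (α ℓ : ℕ) ≤ N}) :=
    Submodule.span ℝ {x | ∃ i, i ≠ j ∧ x = vrow N z i} with hW
  set m := s - 1 with hmdef
  have hm1 : 1 ≤ m := by omega
  have hm0 : m ≠ 0 := by omega
  have hne : Nonempty {i : Fin s // i ≠ j} := by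
    obtain ⟨i, hi⟩ := Fintype.exists_ne_of_one_lt_card (by simp; omega) j
    exact ⟨⟨i, hi⟩⟩
  set ρ₀ : ℝ := ⨅ i : {i : Fin s // i ≠ j}, |(⟪v, z j - z i.1⟫ : ℝ)| with hρ₀
  have hρnn : (0:ℝ) ≤ ρ₀ := le_ciInf fun i => abs_nonneg _
  have hρle : ∀ i : {i : Fin s // i ≠ j}, ρ₀ ≤ |(⟪v, z j - z i.1⟫ : ℝ)| := fun i =>
    ciInf_le (Finite.bddBelow_range _) i
  have hRHS0 : (0:ℝ) ≤ Metric.infDist (vrow N z j) (W : Set _) / ‖vrow N z j‖ :=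
    div_nonneg Metric.infDist_nonneg (norm_nonneg _)
  have hν1 : (1:ℝ) ≤ ((N + n).choose N : ℝ) := by
    exact_mod_cast Nat.one_le_iff_ne_zero.mpr (Nat.choose_pos (by omega : N ≤ N + n)).ne'
  have hD : (0:ℝ) < (4 * n : ℝ) ^ m * s * ((N + n).choose N : ℝ) := by
    have h4n : (0:ℝ) < 4 * n := by positivity
    have hs0 : (0:ℝ) < s := by positivity
    exact mul_pos (mul_pos (pow_pos h4n m) hs0) (lt_of_lt_of_le zero_lt_one hν1)
  rcases eq_or_lt_of_le hρnn with h0 | hρpos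
  · rw [← h0, zero_pow hm0]
    exact mul_nonneg hRHS0 hD.le
  -- main case: ρ₀ > 0
  set d : {i : Fin s // i ≠ j} → ℝ := fun i => ⟪v, z j - z i.1⟫ with hd
  have hdlow : ∀ i, ρ₀ ≤ |d i| := hρle
  have hdne : ∀ i, d i ≠ 0 := by
    intro i h
    have := hdlow i
    rw [h, abs_zero] at this
    linarith
  set L : MvPolynomial (Fin n) ℝ := ∑ ℓ, MvPolynomial.C (v ℓ) * MvPolynomial.X ℓ with hL
  have hLeval : ∀ x : EuclideanSpace ℝ (Fin n),
      MvPolynomial.eval (fun ℓ => x ℓ) L = ⟪v, x⟫ := by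
    intro x
    rw [hL, map_sum, PiLp.inner_apply]
    simp [RCLike.inner_apply, mul_comm]
  set P : MvPolynomial (Fin n) ℝ :=
    ∏ i : {i : Fin s // i ≠ j},
      (MvPolynomial.C (d i)⁻¹ * (L - MvPolynomial.C (⟪v, z i.1⟫ : ℝ))) with hP
  have hPeval : ∀ k : Fin s, MvPolynomial.eval (fun ℓ => z k ℓ) P
      = ∏ i : {i : Fin s // i ≠ j}, (d i)⁻¹ * ((⟪v, z k⟫ : ℝ) - ⟪v, z i.1⟫) := by
    intro k
    rw [hP, map_prod]
    apply Finset.prod_congr rfl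
    intro i _
    rw [map_mul, map_sub, MvPolynomial.eval_C, MvPolynomial.eval_C, hLeval]
  have hdi : ∀ i : {i : Fin s // i ≠ j}, d i = (⟪v, z j⟫ : ℝ) - ⟪v, z i.1⟫ := fun i =>
    inner_sub_right v (z j) (z i.1)
  have hPj : MvPolynomial.eval (fun ℓ => z j ℓ) P = 1 := by
    rw [hPeval]
    apply Finset.prod_eq_one
    intro i _
    rw [← hdi i]
    exact inv_mul_cancel₀ (hdne i)
  have hPk : ∀ k, k ≠ j → MvPolynomial.eval (fun ℓ => z k ℓ) P = 0 := by
    intro k hk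
    rw [hPeval]
    apply Finset.prod_eq_zero (Finset.mem_univ (⟨k, hk⟩ : {i : Fin s // i ≠ j}))
    simp
  have hcardm : Fintype.card {i : Fin s // i ≠ j} = m := by
    simp [Fintype.card_subtype_compl, hmdef]
  have hdeg : P.totalDegree ≤ N := by
    have h1 : ∀ i : {i : Fin s // i ≠ j},
        (MvPolynomial.C (d i)⁻¹ * (L - MvPolynomial.C (⟪v, z i.1⟫ : ℝ))).totalDegree ≤ 1 := by
      intro i
      refine le_trans (MvPolynomial.totalDegree_mul _ _) ?_
      rw [MvPolynomial.totalDegree_C, zero_add]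
      refine le_trans (MvPolynomial.totalDegree_sub _ _) ?_
      rw [MvPolynomial.totalDegree_C]
      apply sup_le _ (Nat.zero_le _)
      refine le_trans (MvPolynomial.totalDegree_finset_sum _ _) ?_
      apply Finset.sup_le
      intro ℓ _
      refine le_trans (MvPolynomial.totalDegree_mul _ _) ?_
      rw [MvPolynomial.totalDegree_C, MvPolynomial.totalDegree_X]
    have h2 : P.totalDegree ≤ m := by
      refine le_trans (MvPolynomial.totalDegree_finset_prod _ _) ?_
      have h3 := Finset.sum_le_card_nsmul Finset.univ
        (fun i : {i : Fin s // i ≠ j} =>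
          (MvPolynomial.C (d i)⁻¹ * (L - MvPolynomial.C (⟪v, z i.1⟫ : ℝ))).totalDegree)
        1 (fun i _ => h1 i)
      simpa [Finset.card_univ, hcardm] using h3
    omega
  -- coefficient bound
  have hSL : S10 L ≤ (n : ℝ) := by
    refine le_trans (S10_sum_le _ _) ?_
    have hterm : ∀ ℓ : Fin n, S10 (MvPolynomial.C (v ℓ) * MvPolynomial.X ℓ) ≤ 1 := by
      intro ℓ
      have h1 : S10 (MvPolynomial.C (v ℓ) * MvPolynomial.X ℓ)
          ≤ S10 (MvPolynomial.C (v ℓ) : MvPolynomial (Fin n) ℝ) * S10 (MvPolynomial.X ℓ) :=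
        S10_mul _ _
      have h2 : S10 (MvPolynomial.X ℓ : MvPolynomial (Fin n) ℝ) ≤ 1 := by
        have hX : (MvPolynomial.X ℓ : MvPolynomial (Fin n) ℝ)
            = MvPolynomial.monomial (Finsupp.single ℓ 1) 1 := rfl
        rw [hX]
        simpa using S10_monomial_le (Finsupp.single ℓ 1) (1:ℝ)
      have h3 : S10 (MvPolynomial.C (v ℓ) : MvPolynomial (Fin n) ℝ) ≤ 1 := by
        refine le_trans (S10_C_le _) ?_
        rw [← hv]
        exact coord_abs_le_norm v ℓ
      nlinarith [S10_nonneg (MvPolynomial.C (v ℓ) : MvPolynomial (Fin n) ℝ),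
        S10_nonneg (MvPolynomial.X ℓ : MvPolynomial (Fin n) ℝ)]
    calc ∑ ℓ, S10 (MvPolynomial.C (v ℓ) * MvPolynomial.X ℓ) ≤ ∑ _ℓ : Fin n, (1:ℝ) :=
          Finset.sum_le_sum fun ℓ _ => hterm ℓ
      _ = n := by simp
  have hSP : S10 P ≤ (ρ₀⁻¹ * (2 * n)) ^ m := by
    have hfac : ∀ i : {i : Fin s // i ≠ j},
        S10 (MvPolynomial.C (d i)⁻¹ * (L - MvPolynomial.C (⟪v, z i.1⟫ : ℝ)))
          ≤ ρ₀⁻¹ * (2 * n) := by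
      intro i
      have ha : |(⟪v, z i.1⟫ : ℝ)| ≤ 1 := by
        refine le_trans (abs_real_inner_le_norm v (z i.1)) ?_
        rw [hv, one_mul]
        exact hball i.1
      have h1 : S10 (L - MvPolynomial.C (⟪v, z i.1⟫ : ℝ)) ≤ (n : ℝ) + 1 := by
        refine le_trans (S10_sub _ _) ?_
        exact add_le_add hSL (le_trans (S10_C_le _) ha)
      have h2 : S10 (MvPolynomial.C (d i)⁻¹ : MvPolynomial (Fin n) ℝ) ≤ ρ₀⁻¹ := by
        refine le_trans (S10_C_le _) ?_
        rw [abs_inv]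
        exact inv_anti₀ hρpos (hdlow i)
      calc S10 (MvPolynomial.C (d i)⁻¹ * (L - MvPolynomial.C (⟪v, z i.1⟫ : ℝ)))
          ≤ S10 (MvPolynomial.C (d i)⁻¹ : MvPolynomial (Fin n) ℝ)
            * S10 (L - MvPolynomial.C (⟪v, z i.1⟫ : ℝ)) := S10_mul _ _
        _ ≤ ρ₀⁻¹ * ((n:ℝ) + 1) := by
            apply mul_le_mul h2 h1 (S10_nonneg _) (by positivity)
        _ ≤ ρ₀⁻¹ * (2 * n) := by
            have hn' : (1:ℝ) ≤ n := by exact_mod_cast hn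
            have : (n:ℝ) + 1 ≤ 2 * n := by linarith
            exact mul_le_mul_of_nonneg_left this (by positivity)
    calc S10 P ≤ ∏ _i : {i : Fin s // i ≠ j}, (ρ₀⁻¹ * (2 * n)) := by
          rw [hP]
          exact S10_prod_le _ _ _ (fun i _ => hfac i) (fun i _ => by positivity)
      _ = (ρ₀⁻¹ * (2 * n)) ^ m := by
          rw [Finset.prod_const, Finset.card_univ, hcardm]
  -- index embedding
  set ι : {α : Fin n → Fin (N + 1) // ∑ ℓ, (α ℓ : ℕ) ≤ N} → (Fin n →₀ ℕ) :=
    fun α => Finsupp.equivFunOnFinite.symm (fun ℓ => (α.1 ℓ : ℕ)) with hι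
  have hιapp : ∀ α ℓ, ι α ℓ = (α.1 ℓ : ℕ) := fun α ℓ =>
    Finsupp.equivFunOnFinite_symm_apply_apply _ _
  have hιinj : Function.Injective ι := by
    intro α β h
    apply Subtype.ext
    funext ℓ
    have h2 : (α.1 ℓ : ℕ) = (β.1 ℓ : ℕ) := by rw [← hιapp α ℓ, ← hιapp β ℓ, h]
    exact Fin.ext h2
  have hesum : ∀ e ∈ P.support, ∀ ℓ, e ℓ ≤ N := by
    intro e he ℓ
    have h1 : (e.sum fun _ k => k) ≤ P.totalDegree := MvPolynomial.le_totalDegree he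
    have h2 : e ℓ ≤ e.sum fun _ k => k := by
      rw [Finsupp.sum]
      by_cases hmem : ℓ ∈ e.support
      · exact Finset.single_le_sum (f := fun a => e a) (fun _ _ => Nat.zero_le _) hmem
      · simp [Finsupp.notMem_support_iff.mp hmem]
    omega
  have hsupp : P.support ⊆ Finset.image ι Finset.univ := by
    intro e he
    have hlt : ∀ ℓ, e ℓ < N + 1 := fun ℓ => Nat.lt_succ_of_le (hesum e he ℓ)
    have hsum : ∑ ℓ, e ℓ ≤ N := by
      have h1 : (e.sum fun _ k => k) = ∑ ℓ, e ℓ := Finsupp.sum_fintype _ _ (fun _ => rfl)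
      have h2 := MvPolynomial.le_totalDegree he
      omega
    refine Finset.mem_image.mpr ⟨⟨fun ℓ => ⟨e ℓ, hlt ℓ⟩, by simpa using hsum⟩, Finset.mem_univ _, ?_⟩
    exact Finsupp.ext fun ℓ => hιapp _ ℓ
  -- the dual vector c
  set c : EuclideanSpace ℝ {α : Fin n → Fin (N + 1) // ∑ ℓ, (α ℓ : ℕ) ≤ N} :=
    WithLp.toLp 2 (fun α => MvPolynomial.coeff (ι α) P) with hc
  have hpair : ∀ k : Fin s, (⟪c, vrow N z k⟫ : ℝ) = MvPolynomial.eval (fun ℓ => z k ℓ) P := by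
    intro k
    rw [MvPolynomial.eval_eq']
    have hinner : (⟪c, vrow N z k⟫ : ℝ) = ∑ α, c α * vrow N z k α := by
      rw [PiLp.inner_apply]
      simp [RCLike.inner_apply, mul_comm]
    rw [hinner]
    have hterm : ∀ α, c α * vrow N z k α
        = MvPolynomial.coeff (ι α) P * ∏ ℓ, (z k ℓ) ^ ((ι α) ℓ) := fun α => rfl
    rw [Finset.sum_congr rfl (fun α _ => hterm α)]
    have himg : ∑ e ∈ Finset.image ι Finset.univ,
        (MvPolynomial.coeff e P * ∏ ℓ, (z k ℓ) ^ (e ℓ))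
        = ∑ α, (MvPolynomial.coeff (ι α) P * ∏ ℓ, (z k ℓ) ^ ((ι α) ℓ)) :=
      Finset.sum_image (fun α _ β _ h => hιinj h)
    rw [← himg]
    exact (Finset.sum_subset hsupp (fun e _ he => by
      rw [MvPolynomial.notMem_support_iff.mp he, zero_mul])).symm
  have hone : (⟪c, vrow N z j⟫ : ℝ) = 1 := by rw [hpair j, hPj]
  have horth : ∀ w ∈ W, (⟪c, w⟫ : ℝ) = 0 := by
    intro w hw
    induction hw using Submodule.span_induction with
    | mem x hx =>
      obtain ⟨i, hij, rfl⟩ := hx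
      rw [hpair i]
      exact hPk i hij
    | zero => exact inner_zero_right c
    | add x y hx hy ihx ihy => rw [inner_add_right, ihx, ihy, add_zero]
    | smul a x hx ih => rw [real_inner_smul_right, ih, mul_zero]
  have hlow : ∀ w ∈ (W : Set _), 1 ≤ ‖c‖ * dist (vrow N z j) w := by
    intro w hw
    have h1 : (1:ℝ) = ⟪c, vrow N z j - w⟫ := by
      rw [inner_sub_right, horth w hw, sub_zero, hone]
    calc (1:ℝ) = ⟪c, vrow N z j - w⟫ := h1
      _ ≤ |(⟪c, vrow N z j - w⟫ : ℝ)| := le_abs_self _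
      _ ≤ ‖c‖ * ‖vrow N z j - w‖ := abs_real_inner_le_norm _ _
      _ = ‖c‖ * dist (vrow N z j) w := by rw [dist_eq_norm]
  have hcpos : (0:ℝ) < ‖c‖ := by
    rw [norm_pos_iff]
    intro h
    rw [h, inner_zero_left] at hone
    norm_num at hone
  have hinf : 1 / ‖c‖ ≤ Metric.infDist (vrow N z j) (W : Set _) := by
    rw [Metric.infDist_eq_iInf]
    have hWne' : (W : Set (EuclideanSpace ℝ {α : Fin n → Fin (N + 1) // ∑ ℓ, (α ℓ : ℕ) ≤ N})).Nonempty :=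
      ⟨0, W.zero_mem⟩
    have hWne := hWne'.to_subtype
    apply le_ciInf
    intro w
    rw [div_le_iff₀ hcpos]
    rw [mul_comm]
    exact hlow w.1 w.2
  -- norm bounds
  have hIcard : (Fintype.card {α : Fin n → Fin (N + 1) // ∑ ℓ, (α ℓ : ℕ) ≤ N} : ℝ)
      ≤ ((N + n).choose N : ℝ) := by exact_mod_cast card_index_le
  have hventry : ∀ α, |vrow N z j α| ≤ 1 := by
    intro α
    have : vrow N z j α = ∏ ℓ, (z j ℓ) ^ (α.1 ℓ : ℕ) := rfl
    rw [this, Finset.abs_prod]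
    calc ∏ ℓ, |(z j ℓ) ^ (α.1 ℓ : ℕ)| ≤ ∏ _ℓ : Fin n, (1:ℝ) := by
          apply Finset.prod_le_prod (fun ℓ _ => abs_nonneg _)
          intro ℓ _
          rw [abs_pow]
          exact pow_le_one₀ (abs_nonneg _) (le_trans (coord_abs_le_norm (z j) ℓ) (hball j))
      _ = 1 := Finset.prod_const_one
  have hvle : ‖vrow N z j‖ ≤ ((N + n).choose N : ℝ) := by
    rw [EuclideanSpace.norm_eq]
    have hsum : ∑ α, ‖vrow N z j α‖ ^ 2
        ≤ (Fintype.card {α : Fin n → Fin (N + 1) // ∑ ℓ, (α ℓ : ℕ) ≤ N} : ℝ) := by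
      calc ∑ α, ‖vrow N z j α‖ ^ 2 ≤ ∑ _α : {α : Fin n → Fin (N + 1) // ∑ ℓ, (α ℓ : ℕ) ≤ N},
            (1:ℝ) := by
            apply Finset.sum_le_sum
            intro α _
            rw [Real.norm_eq_abs]
            nlinarith [hventry α, abs_nonneg (vrow N z j α)]
        _ = _ := by simp
    calc Real.sqrt (∑ α, ‖vrow N z j α‖ ^ 2)
        ≤ Real.sqrt (((N + n).choose N : ℝ) ^ 2) := by
          apply Real.sqrt_le_sqrt
          nlinarith [hν1, hIcard, hsum]
      _ = ((N + n).choose N : ℝ) := Real.sqrt_sq (by positivity)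
  -- final assembly
  have hcnorm : ‖c‖ ≤ S10 P := by
    rw [EuclideanSpace.norm_eq]
    have habs : ∑ α, |c α| = S10 P := by
      rw [S10]
      have himg : ∑ e ∈ Finset.image ι Finset.univ, |MvPolynomial.coeff e P|
          = ∑ α, |MvPolynomial.coeff (ι α) P| :=
        Finset.sum_image (fun α _ β _ h => hιinj h)
      rw [← himg]
      exact (Finset.sum_subset hsupp (fun e _ he => by
        rw [MvPolynomial.notMem_support_iff.mp he, abs_zero])).symm
    have hsq : ∑ α, ‖c α‖ ^ 2 ≤ (S10 P) ^ 2 := by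
      have h1 : ∀ α, |c α| ≤ ∑ β, |c β| := fun α =>
        Finset.single_le_sum (f := fun β => |c β|) (fun _ _ => abs_nonneg _) (Finset.mem_univ α)
      calc ∑ α, ‖c α‖ ^ 2 = ∑ α, |c α| * |c α| := by
            apply Finset.sum_congr rfl
            intro α _
            rw [Real.norm_eq_abs, sq]
        _ ≤ ∑ α, |c α| * (∑ β, |c β|) := by
            apply Finset.sum_le_sum
            intro α _
            exact mul_le_mul_of_nonneg_left (h1 α) (abs_nonneg _)
        _ = (∑ β, |c β|) ^ 2 := by rw [← Finset.sum_mul, sq]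
        _ = (S10 P) ^ 2 := by rw [habs]
    calc Real.sqrt (∑ α, ‖c α‖ ^ 2) ≤ Real.sqrt ((S10 P) ^ 2) := Real.sqrt_le_sqrt hsq
      _ = S10 P := Real.sqrt_sq (S10_nonneg P)
  have hcb : ρ₀ ^ m * ‖c‖ ≤ (2 * (n:ℝ)) ^ m := by
    calc ρ₀ ^ m * ‖c‖ ≤ ρ₀ ^ m * (ρ₀⁻¹ * (2 * n)) ^ m :=
          mul_le_mul_of_nonneg_left (le_trans hcnorm hSP) (pow_nonneg hρnn m)
      _ = (ρ₀ * (ρ₀⁻¹ * (2 * n))) ^ m := by rw [← mul_pow]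
      _ = (2 * (n:ℝ)) ^ m := by
          rw [← mul_assoc, mul_inv_cancel₀ (ne_of_gt hρpos), one_mul]
  have hA0 : (0:ℝ) ≤ Metric.infDist (vrow N z j) (W : Set _) := Metric.infDist_nonneg
  have hV0 : (0:ℝ) < ‖vrow N z j‖ := by
    rw [norm_pos_iff]
    intro h
    rw [h, inner_zero_right] at hone
    norm_num at hone
  have hone_le : (1:ℝ) ≤ Metric.infDist (vrow N z j) (W : Set _) * ‖c‖ :=
    (div_le_iff₀ hcpos).mp hinf
  have h24 : (2 * (n:ℝ)) ^ m ≤ (4 * (n:ℝ)) ^ m := by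
    apply pow_le_pow_left₀ (by positivity)
    have : (0:ℝ) ≤ n := by positivity
    linarith
  have hs1 : (1:ℝ) ≤ (s:ℝ) := by exact_mod_cast (by omega : 1 ≤ s)
  set A : ℝ := Metric.infDist (vrow N z j) (W : Set _) with hA
  have hinner2 : (2 * (n:ℝ)) ^ m * ((N + n).choose N : ℝ)
      ≤ (4 * (n:ℝ)) ^ m * s * ((N + n).choose N : ℝ) := by
    calc (2 * (n:ℝ)) ^ m * ((N + n).choose N : ℝ)
        ≤ (4 * (n:ℝ)) ^ m * ((N + n).choose N : ℝ) :=
          mul_le_mul_of_nonneg_right h24 (by positivity)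
      _ ≤ (4 * (n:ℝ)) ^ m * s * ((N + n).choose N : ℝ) := by
          apply mul_le_mul_of_nonneg_right _ (by positivity)
          nlinarith [pow_nonneg (by positivity : (0:ℝ) ≤ 4 * (n:ℝ)) m]
  calc ρ₀ ^ m ≤ ρ₀ ^ m * (A * ‖c‖) := le_mul_of_one_le_right (pow_nonneg hρnn m) hone_le
    _ = A * (ρ₀ ^ m * ‖c‖) := by ring
    _ ≤ A * (2 * (n:ℝ)) ^ m := mul_le_mul_of_nonneg_left hcb hA0
    _ ≤ A / ‖vrow N z j‖ * ((4 * (n:ℝ)) ^ m * s * ((N + n).choose N : ℝ)) := by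
        rw [div_mul_eq_mul_div, le_div_iff₀ hV0]
        calc A * (2 * (n:ℝ)) ^ m * ‖vrow N z j‖
            ≤ A * (2 * (n:ℝ)) ^ m * ((N + n).choose N : ℝ) := by
              apply mul_le_mul_of_nonneg_left hvle (mul_nonneg hA0 (by positivity))
          _ = A * ((2 * (n:ℝ)) ^ m * ((N + n).choose N : ℝ)) := by ring
          _ ≤ A * ((4 * (n:ℝ)) ^ m * s * ((N + n).choose N : ℝ)) :=
              mul_le_mul_of_nonneg_left hinner2 hA0

end Main

set_option maxHeartbeats 1000000 in
/-- Angle bound: the sine of the angle `θ_j` between the row `V_N(z_j)` and the span `W_j` of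
the other rows, i.e. `dist(V_N(z_j), W_j)/‖V_N(z_j)‖₂`, is at least
`ρ(Z,j)^{s-1} / ((4n)^{s-1} s ν)` with `ν = C(N+n,N)`. -/
theorem stmt10 {n s N : ℕ} (hs : 2 ≤ s) (z : Fin s → EuclideanSpace ℝ (Fin n))
    (hz : Function.Injective z) (hball : ∀ i, ‖z i‖ ≤ 1) (hN : s - 1 ≤ N) (j : Fin s) :
    rho z j ^ (s - 1) / ((4 * n : ℝ) ^ (s - 1) * s * ((N + n).choose N : ℝ)) ≤
      Metric.infDist (vrow N z j)
          (Submodule.span ℝ {x | ∃ i, i ≠ j ∧ x = vrow N z i} : Set _) / ‖vrow N z j‖ := by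
  classical
  have hm : 1 ≤ s - 1 := by omega
  have hm0 : s - 1 ≠ 0 := by omega
  have hRHS0 : (0:ℝ) ≤ Metric.infDist (vrow N z j)
      (Submodule.span ℝ {x | ∃ i, i ≠ j ∧ x = vrow N z i} : Set _) / ‖vrow N z j‖ :=
    div_nonneg Metric.infDist_nonneg (norm_nonneg _)
  rcases Nat.eq_zero_or_pos n with hn | hn
  · subst hn
    have : ((4 * 0 : ℕ) : ℝ) ^ (s-1) = 0 := by
      norm_num [zero_pow hm0]
    simp only [Nat.cast_zero] at this ⊢
    rw [show ((4:ℝ) * 0) ^ (s-1) = 0 by norm_num [zero_pow hm0]]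
    rw [zero_mul, zero_mul, div_zero]
    exact hRHS0
  -- main case: n ≥ 1
  set K : ℝ := Metric.infDist (vrow N z j)
      (Submodule.span ℝ {x | ∃ i, i ≠ j ∧ x = vrow N z i} : Set _) / ‖vrow N z j‖ *
      ((4 * n : ℝ) ^ (s - 1) * s * ((N + n).choose N : ℝ)) with hK
  have hD : (0:ℝ) < (4 * n : ℝ) ^ (s - 1) * s * ((N + n).choose N : ℝ) := by
    apply mul_pos (mul_pos (pow_pos (by positivity) _) (by positivity))
    have := Nat.choose_pos (show N ≤ N + n by omega)
    positivity
  have hK0 : 0 ≤ K := mul_nonneg hRHS0 hD.le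
  have hsphere : Nonempty (Metric.sphere (0 : EuclideanSpace ℝ (Fin n)) 1) := by
    refine ⟨⟨EuclideanSpace.single ⟨0, hn⟩ (1:ℝ), ?_⟩⟩
    rw [mem_sphere_zero_iff_norm, EuclideanSpace.norm_single]
    norm_num
  have hrho_le : rho z j ≤ K ^ ((s - 1 : ℕ) : ℝ)⁻¹ := by
    apply ciSup_le
    intro v
    have hkey := key_estimate hs hn z hball hN j v (norm_eq_of_mem_sphere v)
    have hf0 : 0 ≤ ⨅ i : {i : Fin s // i ≠ j},
        |(⟪(v : EuclideanSpace ℝ (Fin n)), z j - z i.1⟫ : ℝ)| := by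
      have : Nonempty {i : Fin s // i ≠ j} := by
        obtain ⟨i, hi⟩ := Fintype.exists_ne_of_one_lt_card (by simp; omega) j
        exact ⟨⟨i, hi⟩⟩
      exact le_ciInf fun i => abs_nonneg _
    have hpow : (⨅ i : {i : Fin s // i ≠ j},
        |(⟪(v : EuclideanSpace ℝ (Fin n)), z j - z i.1⟫ : ℝ)|) ^ (s-1)
        ≤ (K ^ ((s - 1 : ℕ) : ℝ)⁻¹) ^ (s-1) := by
      rw [Real.rpow_inv_natCast_pow hK0 hm0]
      exact hkey
    exact (pow_le_pow_iff_left₀ hf0 (Real.rpow_nonneg hK0 _) hm0).mp hpow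
  have hrho0 : 0 ≤ rho z j := by
    apply Real.iSup_nonneg
    intro v
    have : Nonempty {i : Fin s // i ≠ j} := by
      obtain ⟨i, hi⟩ := Fintype.exists_ne_of_one_lt_card (by simp; omega) j
      exact ⟨⟨i, hi⟩⟩
    exact le_ciInf fun i => abs_nonneg _
  have : rho z j ^ (s-1) ≤ K := by
    calc rho z j ^ (s-1) ≤ (K ^ ((s - 1 : ℕ) : ℝ)⁻¹) ^ (s-1) :=
          pow_le_pow_left₀ hrho0 hrho_le _
      _ = K := Real.rpow_inv_natCast_pow hK0 hm0
  rw [div_le_iff₀ hD]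
  exact this
end

section
/- Let Z = {z_1,…,z_s} ⊂ ℝ^n be s ≥ 2 distinct points with ‖z_i‖₂ ≤ 1 and κ(Z) > 0, let N ≥ s−1, and let y = (y_1,…,y_s) ∈ ℝ^s. Then there exists a polynomial P ∈ ℝ[x_1,…,x_n] of total degree at most N with P(z_i) = y_i for i = 1,…,s, whose monomial coefficients satisfy max_{|α|≤N} |a_α| ≤ s² · ‖y‖_∞ · (4n/κ(Z))^{s−1}. -/
open scoped RealInnerProductSpace

/-- `κ(Z) = min_j ρ(Z,j)`. -/
noncomputable def kappa {n s : ℕ} (z : Fin s → EuclideanSpace ℝ (Fin n)) : ℝ :=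
  ⨅ j, rho z j

namespace Stmt11Aux

open MvPolynomial

/-- `Q` coefficient-wise dominates the absolute values of coefficients of `P`. -/
def Dom {n : ℕ} (P Q : MvPolynomial (Fin n) ℝ) : Prop :=
  ∀ α, |P.coeff α| ≤ Q.coeff α

namespace Dom

variable {n : ℕ} {P P₁ P₂ Q Q₁ Q₂ : MvPolynomial (Fin n) ℝ}

lemma nonneg (h : Dom P Q) (α : Fin n →₀ ℕ) : 0 ≤ Q.coeff α :=
  (abs_nonneg _).trans (h α)

lemma mul (h₁ : Dom P₁ Q₁) (h₂ : Dom P₂ Q₂) : Dom (P₁ * P₂) (Q₁ * Q₂) := by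
  intro α
  classical
  rw [coeff_mul, coeff_mul]
  refine (Finset.abs_sum_le_sum_abs _ _).trans (Finset.sum_le_sum fun x _ => ?_)
  rw [abs_mul]
  exact mul_le_mul (h₁ _) (h₂ _) (abs_nonneg _) (h₁.nonneg _)

lemma one : Dom (1 : MvPolynomial (Fin n) ℝ) 1 := by
  intro α
  classical
  rw [coeff_one]
  split_ifs <;> simp

lemma prod {ι : Type*} (t : Finset ι) (f g : ι → MvPolynomial (Fin n) ℝ)
    (h : ∀ i ∈ t, Dom (f i) (g i)) : Dom (∏ i ∈ t, f i) (∏ i ∈ t, g i) := by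
  classical
  induction t using Finset.induction_on with
  | empty => simpa using one
  | insert _ _ hx ih =>
    rw [Finset.prod_insert hx, Finset.prod_insert hx]
    exact (h _ (Finset.mem_insert_self _ _)).mul
      (ih fun i hi => h i (Finset.mem_insert_of_mem hi))

lemma add (h₁ : Dom P₁ Q₁) (h₂ : Dom P₂ Q₂) : Dom (P₁ + P₂) (Q₁ + Q₂) := by
  intro α
  rw [coeff_add, coeff_add]
  exact (abs_add_le _ _).trans (add_le_add (h₁ α) (h₂ α))

lemma sub (h₁ : Dom P₁ Q₁) (h₂ : Dom P₂ Q₂) : Dom (P₁ - P₂) (Q₁ + Q₂) := by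
  intro α
  rw [coeff_sub, coeff_add]
  exact (abs_sub _ _).trans (add_le_add (h₁ α) (h₂ α))

lemma zero : Dom (0 : MvPolynomial (Fin n) ℝ) 0 := by
  intro α; simp

lemma sum {ι : Type*} (t : Finset ι) (f g : ι → MvPolynomial (Fin n) ℝ)
    (h : ∀ i ∈ t, Dom (f i) (g i)) : Dom (∑ i ∈ t, f i) (∑ i ∈ t, g i) := by
  classical
  induction t using Finset.induction_on with
  | empty => simpa using zero
  | insert _ _ hx ih =>
    rw [Finset.sum_insert hx, Finset.sum_insert hx]
    exact (h _ (Finset.mem_insert_self _ _)).add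
      (ih fun i hi => h i (Finset.mem_insert_of_mem hi))

lemma C_mul (a : ℝ) (h : Dom P Q) : Dom (C a * P) (C |a| * Q) := by
  intro α
  rw [coeff_C_mul, coeff_C_mul, abs_mul]
  exact mul_le_mul_of_nonneg_left (h α) (abs_nonneg a)

lemma C (a : ℝ) : Dom (C a : MvPolynomial (Fin n) ℝ) (MvPolynomial.C |a|) := by
  intro α
  classical
  rw [coeff_C, coeff_C]
  split_ifs <;> simp

lemma X (ℓ : Fin n) : Dom (X ℓ : MvPolynomial (Fin n) ℝ) (MvPolynomial.X ℓ) := by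
  intro α
  classical
  rw [coeff_X']
  split_ifs <;> simp

end Dom

lemma coeff_le_eval_one {n : ℕ} {Q : MvPolynomial (Fin n) ℝ}
    (h : ∀ α, 0 ≤ Q.coeff α) (α : Fin n →₀ ℕ) :
    Q.coeff α ≤ eval (fun _ => (1 : ℝ)) Q := by
  rw [eval_eq]
  simp only [one_pow, Finset.prod_const_one, mul_one]
  by_cases hα : α ∈ Q.support
  · exact Finset.single_le_sum (fun i _ => h i) hα
  · rw [MvPolynomial.notMem_support_iff.mp hα]
    exact Finset.sum_nonneg fun i _ => h i

end Stmt11Aux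

set_option maxHeartbeats 1000000 in
/-- Existence of a coefficient-controlled interpolant: for distinct points `z_1,…,z_s` in the
closed unit ball with `κ(Z) > 0`, `N ≥ s-1` and data `y ∈ ℝ^s`, there is a polynomial `P` of
total degree ≤ N with `P(z_i) = y_i` whose monomial coefficients satisfy
`|a_α| ≤ s² ‖y‖ (4n/κ(Z))^{s-1}`. Here `‖y‖` is the sup norm on `Fin s → ℝ`. -/
theorem stmt11 {n s : ℕ} (hs : 2 ≤ s) (z : Fin s → EuclideanSpace ℝ (Fin n))
    (hz : Function.Injective z) (hball : ∀ i, ‖z i‖ ≤ 1) (hκ : 0 < kappa z)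
    (N : ℕ) (hN : s - 1 ≤ N) (y : Fin s → ℝ) :
    ∃ P : MvPolynomial (Fin n) ℝ, P.totalDegree ≤ N ∧
      (∀ i, MvPolynomial.eval (fun ℓ => z i ℓ) P = y i) ∧
      ∀ α : Fin n →₀ ℕ, |P.coeff α| ≤ (s : ℝ) ^ 2 * ‖y‖ * (4 * n / kappa z) ^ (s - 1) := by
  classical
  open MvPolynomial Stmt11Aux in
  -- the ambient dimension is positive
  have hn : 0 < n := by
    rcases Nat.eq_zero_or_pos n with h0 | h
    · exfalso
      subst h0
      haveI : Subsingleton (EuclideanSpace ℝ (Fin 0)) :=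
        ⟨fun a b => by ext i; exact i.elim0⟩
      have h01 : (⟨0, by omega⟩ : Fin s) ≠ ⟨1, by omega⟩ := by simp [Fin.ext_iff]
      exact h01 (hz (Subsingleton.elim _ _))
    · exact h
  haveI hne : Nonempty (Metric.sphere (0 : EuclideanSpace ℝ (Fin n)) 1) := by
    refine ⟨⟨EuclideanSpace.single ⟨0, hn⟩ (1 : ℝ), ?_⟩⟩
    rw [mem_sphere_zero_iff_norm, EuclideanSpace.norm_single]
    norm_num
  have hrho_nonneg : ∀ j, 0 ≤ rho z j := fun j =>
    Real.iSup_nonneg fun _ => Real.iInf_nonneg fun _ => abs_nonneg _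
  have hκρ : ∀ j, kappa z ≤ rho z j := fun j =>
    ciInf_le ⟨0, by rintro x ⟨j', rfl⟩; exact hrho_nonneg j'⟩ j
  -- choose a good direction for each j
  have hvex : ∀ j : Fin s, ∃ w : Metric.sphere (0 : EuclideanSpace ℝ (Fin n)) 1,
      ∀ i : Fin s, i ≠ j →
        kappa z / 2 ≤ |(⟪(w : EuclideanSpace ℝ (Fin n)), z j - z i⟫ : ℝ)| := by
    intro j
    have h1 : kappa z / 2 < rho z j := lt_of_lt_of_le (by linarith) (hκρ j)
    unfold rho at h1
    obtain ⟨w, hw⟩ := exists_lt_of_lt_ciSup h1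
    refine ⟨w, fun i hi => ?_⟩
    have h2 : (⨅ i : {i : Fin s // i ≠ j},
        |(⟪(w : EuclideanSpace ℝ (Fin n)), z j - z i.1⟫ : ℝ)|) ≤
        |(⟪(w : EuclideanSpace ℝ (Fin n)), z j - z i⟫ : ℝ)| :=
      ciInf_le (⟨0, by rintro x ⟨i', rfl⟩; exact abs_nonneg _⟩ : BddBelow (Set.range fun i : {i : Fin s // i ≠ j} =>
        |(⟪(w : EuclideanSpace ℝ (Fin n)), z j - z i.1⟫ : ℝ)|)) ⟨i, hi⟩
    linarith
  choose v hv using hvex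
  -- basic data
  set c : Fin s → Fin s → ℝ :=
    fun j i => (⟪(v j : EuclideanSpace ℝ (Fin n)), z i⟫ : ℝ) with hc
  set d : Fin s → Fin s → ℝ :=
    fun j i => (⟪(v j : EuclideanSpace ℝ (Fin n)), z j - z i⟫ : ℝ) with hd
  have hdc : ∀ j i, d j i = c j j - c j i := fun j i => inner_sub_right _ _ _
  have hdlb : ∀ j i, i ≠ j → kappa z / 2 ≤ |d j i| := fun j i hi => hv j i hi
  have hdne : ∀ j i, i ≠ j → d j i ≠ 0 := by
    intro j i hi
    have := hdlb j i hi
    intro h0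
    rw [h0, abs_zero] at this
    linarith
  have hvnorm : ∀ j, ‖(v j : EuclideanSpace ℝ (Fin n))‖ = 1 := fun j =>
    mem_sphere_zero_iff_norm.mp (v j).2
  have hvcoord : ∀ j ℓ, |(v j : EuclideanSpace ℝ (Fin n)) ℓ| ≤ 1 := by
    intro j ℓ
    have h1 := EuclideanSpace.inner_single_left (𝕜 := ℝ) ℓ (1 : ℝ)
      (v j : EuclideanSpace ℝ (Fin n))
    have h2 := abs_real_inner_le_norm
      (EuclideanSpace.single ℓ (1 : ℝ)) (v j : EuclideanSpace ℝ (Fin n))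
    rw [h1] at h2
    simpa [EuclideanSpace.norm_single, hvnorm j] using h2
  have hcb : ∀ j i, |c j i| ≤ 1 := by
    intro j i
    have := abs_real_inner_le_norm (v j : EuclideanSpace ℝ (Fin n)) (z i)
    rw [hvnorm j, one_mul] at this
    exact this.trans (hball i)
  -- the polynomials
  set Lin : Fin s → MvPolynomial (Fin n) ℝ :=
    fun j => ∑ ℓ, MvPolynomial.C ((v j : EuclideanSpace ℝ (Fin n)) ℓ) * MvPolynomial.X ℓ
    with hLin
  set F : Fin s → Fin s → MvPolynomial (Fin n) ℝ :=
    fun j i => MvPolynomial.C (d j i)⁻¹ * (Lin j - MvPolynomial.C (c j i)) with hF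
  set L : Fin s → MvPolynomial (Fin n) ℝ :=
    fun j => ∏ i ∈ Finset.univ.erase j, F j i with hL
  refine ⟨∑ j, MvPolynomial.C (y j) * L j, ?_, ?_, ?_⟩
  · -- total degree bound
    refine (totalDegree_finset_sum _ _).trans (Finset.sup_le fun j _ => ?_)
    refine (totalDegree_mul _ _).trans ?_
    rw [totalDegree_C, zero_add]
    refine (totalDegree_finset_prod _ _).trans ?_
    have hcard : (Finset.univ.erase j).card = s - 1 := by
      rw [Finset.card_erase_of_mem (Finset.mem_univ j), Finset.card_univ, Fintype.card_fin]
    have hstep : ∀ i ∈ Finset.univ.erase j, (F j i).totalDegree ≤ 1 := by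
      intro i _
      refine (totalDegree_mul _ _).trans ?_
      rw [totalDegree_C, zero_add, sub_eq_add_neg]
      refine (totalDegree_add _ _).trans (sup_le ?_ ?_)
      · refine (totalDegree_finset_sum _ _).trans (Finset.sup_le fun ℓ _ => ?_)
        refine (totalDegree_mul _ _).trans ?_
        rw [totalDegree_C, zero_add, totalDegree_X]
      · rw [totalDegree_neg, totalDegree_C]
        exact Nat.zero_le 1
    calc ∑ i ∈ Finset.univ.erase j, (F j i).totalDegree
        ≤ (Finset.univ.erase j).card • 1 := Finset.sum_le_card_nsmul _ _ 1 hstep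
      _ = s - 1 := by rw [hcard, smul_eq_mul, mul_one]
      _ ≤ N := hN
  · -- interpolation
    intro i
    have hevalLin : ∀ j, MvPolynomial.eval (fun ℓ => z i ℓ) (Lin j) = c j i := by
      intro j
      rw [hLin]
      simp only [map_sum, map_mul, eval_C, eval_X]
      rw [hc]
      simp [PiLp.inner_apply, RCLike.inner_apply]
      exact Finset.sum_congr rfl fun _ _ => mul_comm _ _
    have hevalF : ∀ j i', MvPolynomial.eval (fun ℓ => z i ℓ) (F j i') =
        (d j i')⁻¹ * (c j i - c j i') := by
      intro j i'
      rw [hF]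
      simp only [map_mul, map_sub, eval_C, hevalLin j]
    rw [map_sum]
    rw [Finset.sum_eq_single i]
    · rw [map_mul, eval_C, hL]
      simp only [map_prod]
      have : ∀ i' ∈ Finset.univ.erase i,
          MvPolynomial.eval (fun ℓ => z i ℓ) (F i i') = 1 := by
        intro i' hi'
        have hi'i : i' ≠ i := (Finset.mem_erase.mp hi').1
        rw [hevalF, ← hdc]
        exact inv_mul_cancel₀ (hdne i i' hi'i)
      rw [Finset.prod_congr rfl this, Finset.prod_const_one, mul_one]
    · intro j _ hj
      rw [map_mul, hL]
      simp only [map_prod]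
      have : MvPolynomial.eval (fun ℓ => z i ℓ) (F j i) = 0 := by
        rw [hevalF, sub_self, mul_zero]
      rw [Finset.prod_eq_zero (Finset.mem_erase.mpr ⟨Ne.symm hj, Finset.mem_univ i⟩) this,
        mul_zero]
    · intro h
      exact absurd (Finset.mem_univ i) h
  · -- coefficient bound
    intro α
    -- majorant polynomial
    set M : Fin s → Fin s → MvPolynomial (Fin n) ℝ :=
      fun j i => MvPolynomial.C |(d j i)⁻¹| *
        ((∑ ℓ, MvPolynomial.C |(v j : EuclideanSpace ℝ (Fin n)) ℓ| * MvPolynomial.X ℓ) +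
          MvPolynomial.C |c j i|) with hM
    set Q : MvPolynomial (Fin n) ℝ :=
      ∑ j, MvPolynomial.C |y j| * ∏ i ∈ Finset.univ.erase j, M j i with hQ
    have hdom : Dom (∑ j, MvPolynomial.C (y j) * L j) Q := by
      refine Dom.sum _ _ _ fun j _ => Dom.C_mul _ ?_
      refine Dom.prod _ _ _ fun i _ => Dom.C_mul _ ?_
      refine Dom.sub ?_ (Dom.C _)
      exact Dom.sum _ _ _ fun ℓ _ => Dom.C_mul _ (Dom.X ℓ)
    have hQval : MvPolynomial.eval (fun _ => (1 : ℝ)) Q =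
        ∑ j, |y j| * ∏ i ∈ Finset.univ.erase j,
          |(d j i)⁻¹| * ((∑ ℓ, |(v j : EuclideanSpace ℝ (Fin n)) ℓ|) + |c j i|) := by
      rw [hQ]
      simp only [hM, map_sum, map_mul, map_prod, map_add, eval_C, eval_X, mul_one]
    have hfactor : ∀ j i, i ∈ Finset.univ.erase j →
        |(d j i)⁻¹| * ((∑ ℓ, |(v j : EuclideanSpace ℝ (Fin n)) ℓ|) + |c j i|) ≤
          4 * n / kappa z := by
      intro j i hi
      have hij : i ≠ j := (Finset.mem_erase.mp hi).1
      have h1 : |(d j i)⁻¹| ≤ 2 / kappa z := by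
        rw [abs_inv]
        have h2 : 0 < kappa z / 2 := by linarith
        calc |d j i|⁻¹ ≤ (kappa z / 2)⁻¹ :=
              inv_anti₀ h2 (hdlb j i hij)
          _ = 2 / kappa z := by field_simp
      have h2 : (∑ ℓ, |(v j : EuclideanSpace ℝ (Fin n)) ℓ|) + |c j i| ≤ 2 * n := by
        have hs1 : (∑ ℓ, |(v j : EuclideanSpace ℝ (Fin n)) ℓ|) ≤ n := by
          calc (∑ ℓ, |(v j : EuclideanSpace ℝ (Fin n)) ℓ|) ≤ ∑ _ℓ : Fin n, (1 : ℝ) :=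
                Finset.sum_le_sum fun ℓ _ => hvcoord j ℓ
            _ = n := by simp
        have hs2 : |c j i| ≤ n := by
          have : (1 : ℝ) ≤ n := by exact_mod_cast hn
          linarith [hcb j i]
        linarith
      have hnn1 : (0 : ℝ) ≤ |(d j i)⁻¹| := abs_nonneg _
      have hnn2 : (0 : ℝ) ≤ (∑ ℓ, |(v j : EuclideanSpace ℝ (Fin n)) ℓ|) + |c j i| := by
        positivity
      calc |(d j i)⁻¹| * ((∑ ℓ, |(v j : EuclideanSpace ℝ (Fin n)) ℓ|) + |c j i|)
          ≤ (2 / kappa z) * (2 * n) := by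
            refine mul_le_mul h1 h2 hnn2 ?_
            positivity
        _ = 4 * n / kappa z := by ring
    have hB : (0 : ℝ) ≤ 4 * n / kappa z := by positivity
    have hprod : ∀ j, (∏ i ∈ Finset.univ.erase j,
        |(d j i)⁻¹| * ((∑ ℓ, |(v j : EuclideanSpace ℝ (Fin n)) ℓ|) + |c j i|)) ≤
          (4 * n / kappa z) ^ (s - 1) := by
      intro j
      have hcard : (Finset.univ.erase j).card = s - 1 := by
        rw [Finset.card_erase_of_mem (Finset.mem_univ j), Finset.card_univ, Fintype.card_fin]
      calc (∏ i ∈ Finset.univ.erase j,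
            |(d j i)⁻¹| * ((∑ ℓ, |(v j : EuclideanSpace ℝ (Fin n)) ℓ|) + |c j i|))
          ≤ ∏ _i ∈ Finset.univ.erase j, (4 * n / kappa z) := by
            refine Finset.prod_le_prod (fun i _ => ?_) (fun i hi => hfactor j i hi)
            positivity
        _ = (4 * n / kappa z) ^ (s - 1) := by rw [Finset.prod_const, hcard]
    have hyb : ∀ j, |y j| ≤ ‖y‖ := by
      intro j
      have := norm_le_pi_norm y j
      simpa [Real.norm_eq_abs] using this
    have hynn : (0 : ℝ) ≤ ‖y‖ := norm_nonneg _
    calc |(∑ j, MvPolynomial.C (y j) * L j).coeff α|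
        ≤ Q.coeff α := hdom α
      _ ≤ MvPolynomial.eval (fun _ => (1 : ℝ)) Q := coeff_le_eval_one hdom.nonneg α
      _ = ∑ j, |y j| * ∏ i ∈ Finset.univ.erase j,
            |(d j i)⁻¹| * ((∑ ℓ, |(v j : EuclideanSpace ℝ (Fin n)) ℓ|) + |c j i|) := hQval
      _ ≤ ∑ _j : Fin s, ‖y‖ * (4 * n / kappa z) ^ (s - 1) := by
          refine Finset.sum_le_sum fun j _ => ?_
          refine mul_le_mul (hyb j) (hprod j) ?_ hynn
          refine Finset.prod_nonneg fun i _ => ?_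
          positivity
      _ = s * (‖y‖ * (4 * n / kappa z) ^ (s - 1)) := by
          rw [Finset.sum_const, Finset.card_univ, Fintype.card_fin, nsmul_eq_mul]
      _ ≤ (s : ℝ) ^ 2 * ‖y‖ * (4 * n / kappa z) ^ (s - 1) := by
          have h1 : (s : ℝ) ≤ (s : ℝ) ^ 2 := by
            have : (1 : ℝ) ≤ s := by exact_mod_cast (by omega : 1 ≤ s)
            nlinarith
          have h2 : (0 : ℝ) ≤ ‖y‖ * (4 * n / kappa z) ^ (s - 1) := by positivity
          nlinarith
end
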